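/- arXiv:math/0610092 — 5 statements merged into one kernel-verified Lean document; each statement's English description precedes it below -/
import Mathlib

section
/- Let n ≥ 1 and 0 < ρ ≤ R. Then there is a constant C = C(n), independent of ρ and R, such that for every f ∈ L²(ℝⁿ), ‖f‖_{DL²_ρ} ≤ C (R/ρ) ‖f‖_{DL²_R}. -/
set_option maxHeartbeats 1000000

open MeasureTheory ENNReal Set
open scoped RealInnerProductSpace

noncomputable section

/-- The tube norm `‖f‖_{DL²_λ}`: supremum over base points `x₀` and unit directions `ω`
of the sum over `k ∈ ℤ` of the `L²` norms of `f` over the tubes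
`{x : |λ⁻¹(x − x₀) − kω| < 1}`. -/
def tubeNorm {n : ℕ} (lam : ℝ) (f : EuclideanSpace ℝ (Fin n) → ℂ) : ℝ≥0∞ :=
  ⨆ (x₀ : EuclideanSpace ℝ (Fin n)) (ω : EuclideanSpace ℝ (Fin n)) (_ : ‖ω‖ = 1),
    ∑' k : ℤ,
      eLpNorm ({x : EuclideanSpace ℝ (Fin n) |
        ‖lam⁻¹ • (x - x₀) - (k : ℝ) • ω‖ < 1}.indicator f) 2 volume

lemma tubeNorm_le' {n : ℕ} {lam : ℝ} {f : EuclideanSpace ℝ (Fin n) → ℂ} {c : ℝ≥0∞}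
    (h : ∀ x₀ ω : EuclideanSpace ℝ (Fin n), ‖ω‖ = 1 →
      (∑' k : ℤ, eLpNorm ({x : EuclideanSpace ℝ (Fin n) |
        ‖lam⁻¹ • (x - x₀) - (k : ℝ) • ω‖ < 1}.indicator f) 2 volume) ≤ c) :
    tubeNorm lam f ≤ c :=
  iSup_le fun x₀ => iSup_le fun ω => iSup_le fun hω => h x₀ ω hω

lemma le_tubeNorm' {n : ℕ} (lam : ℝ) (f : EuclideanSpace ℝ (Fin n) → ℂ)
    (x₀ ω : EuclideanSpace ℝ (Fin n)) (hω : ‖ω‖ = 1) :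
    (∑' k : ℤ, eLpNorm ({x : EuclideanSpace ℝ (Fin n) |
        ‖lam⁻¹ • (x - x₀) - (k : ℝ) • ω‖ < 1}.indicator f) 2 volume) ≤ tubeNorm lam f :=
  le_iSup_of_le x₀ <| le_iSup_of_le ω <| le_iSup_of_le hω le_rfl

/-- A finite `1/2`-net of the closed unit ball. -/
lemma exists_net (n : ℕ) : ∃ s : Finset (EuclideanSpace ℝ (Fin n)),
    ∀ v : EuclideanSpace ℝ (Fin n), ‖v‖ ≤ 1 → ∃ u ∈ s, ‖v - u‖ ≤ 1/2 := by
  obtain ⟨t, -, htfin, hcov⟩ :=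
    (isCompact_closedBall (0 : EuclideanSpace ℝ (Fin n)) 1).finite_cover_balls
      (e := 1/2) (by norm_num)
  refine ⟨htfin.toFinset, fun v hv => ?_⟩
  have hvmem : v ∈ Metric.closedBall (0 : EuclideanSpace ℝ (Fin n)) 1 := by
    simpa [Metric.mem_closedBall, dist_eq_norm] using hv
  obtain ⟨u, hu, hvu⟩ := by simpa using hcov hvmem
  exact ⟨u, htfin.mem_toFinset.mpr hu, by
    rw [← dist_eq_norm]
    have := (Metric.mem_ball.mp hvu).le
    linarith⟩

/-- Fiber-counting: a composition with a map whose fibers have at most `M` elements. -/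
lemma tsum_comp_le_mul (a : ℤ → ℝ≥0∞) (g : ℤ → ℤ) (M : ℕ)
    (h : ∀ j : ℤ, ∃ t : Finset ℤ, t.card ≤ M ∧ ∀ k, g k = j → k ∈ t) :
    (∑' k, a (g k)) ≤ M * ∑' j, a j := by
  rw [← tsum_fiberwise (fun k => a (g k)) g]
  rw [← ENNReal.tsum_mul_left]
  refine ENNReal.tsum_le_tsum fun j => ?_
  obtain ⟨t, htM, ht⟩ := h j
  calc ∑' (k : g ⁻¹' {j}), a (g k) = ∑' (_ : g ⁻¹' {j}), a j := by
        refine tsum_congr fun k => by rw [k.2]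
    _ ≤ ∑' (_ : (t : Set ℤ)), a j :=
        ENNReal.tsum_mono_subtype (fun _ => a j)
          (show g ⁻¹' {j} ⊆ (t : Set ℤ) from fun k hk => ht k hk)
    _ = ∑ _k ∈ t, a j := Finset.tsum_subtype t (fun _ => a j)
    _ = t.card • a j := by rw [Finset.sum_const]
    _ ≤ M * a j := by
        rw [nsmul_eq_mul]
        exact mul_le_mul_left (by exact_mod_cast Nat.cast_le.mpr htM) _

/-- The fibers of `k ↦ ⌊kρ/R⌋ + d` have at most `⌊R/ρ⌋ + 1` elements. -/
lemma fiber_bound (ρ R : ℝ) (hρ : 0 < ρ) (hρR : ρ ≤ R) (d j : ℤ) :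
    ∃ t : Finset ℤ, t.card ≤ (⌊R/ρ⌋ + 1).toNat ∧
      ∀ k : ℤ, ⌊(k : ℝ) * ρ / R⌋ + d = j → k ∈ t := by
  have hR : 0 < R := hρ.trans_le hρR
  set m := j - d with hm
  set c := (m : ℝ) * R / ρ with hc
  refine ⟨Finset.Ico ⌈c⌉ (⌈c⌉ + (⌊R/ρ⌋ + 1)), ?_, ?_⟩
  · rw [Int.card_Ico]
    simp
  · intro k hk
    have hfl : ⌊(k : ℝ) * ρ / R⌋ = m := by omega
    have h1 : (m : ℝ) ≤ (k : ℝ) * ρ / R := by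
      rw [← hfl]; exact Int.floor_le _
    have h2 : (k : ℝ) * ρ / R < (m : ℝ) + 1 := by
      rw [← hfl]; exact Int.lt_floor_add_one _
    rw [le_div_iff₀ hR] at h1
    rw [div_lt_iff₀ hR] at h2
    rw [Finset.mem_Ico]
    constructor
    · rw [Int.ceil_le, hc, div_le_iff₀ hρ]
      nlinarith
    · have hceil : c ≤ (⌈c⌉ : ℝ) := Int.le_ceil c
      have hkc : (k : ℝ) < c + R / ρ := by
        rw [hc, ← add_div, lt_div_iff₀ hρ]
        nlinarith
      have : (k - ⌈c⌉ : ℤ) ≤ ⌊R/ρ⌋ := by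
        rw [Int.le_floor]
        push_cast
        linarith
      omega

/-- Covering inequality for the `L²` norm of an indicator. -/
lemma eLpNorm_indicator_le_sum {α : Type*} [MeasurableSpace α] {μ : Measure α} {ι : Type*}
    (t : Finset ι) (S : Set α) (T : ι → Set α) (f : α → ℂ)
    (hS : S ⊆ ⋃ i ∈ t, T i) (hT : ∀ i, MeasurableSet (T i))
    (hf : AEStronglyMeasurable f μ) :
    eLpNorm (S.indicator f) 2 μ ≤ ∑ i ∈ t, eLpNorm ((T i).indicator f) 2 μ := by
  have h1 : eLpNorm (S.indicator f) 2 μ ≤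
      eLpNorm (∑ i ∈ t, fun x => ‖(T i).indicator f x‖) 2 μ := by
    refine eLpNorm_mono fun x => ?_
    simp only [Finset.sum_apply]
    by_cases hx : x ∈ S
    · obtain ⟨i, hi, hxi⟩ := by simpa using hS hx
      rw [Set.indicator_of_mem hx]
      calc ‖f x‖ = ‖(T i).indicator f x‖ := by rw [Set.indicator_of_mem hxi]
        _ ≤ ∑ i ∈ t, ‖(T i).indicator f x‖ :=
            Finset.single_le_sum (f := fun i => ‖(T i).indicator f x‖)
              (fun j _ => norm_nonneg _) hi
        _ ≤ ‖∑ i ∈ t, ‖(T i).indicator f x‖‖ := le_abs_self _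
    · rw [Set.indicator_of_notMem hx]
      simp only [norm_zero]
      exact norm_nonneg _
  refine h1.trans ?_
  refine (eLpNorm_sum_le (fun i _ => ?_) one_le_two).trans ?_
  · exact ((hf.indicator (hT i)).norm)
  · refine Finset.sum_le_sum fun i _ => ?_
    exact le_of_eq (eLpNorm_norm _)

/-- The geometric core: every point of a `ρ`-tube lies in an `R`-tube based at one of
finitely many shifted base points, with a controlled index. -/
lemma tube_geom {n : ℕ} (x₀ ω : EuclideanSpace ℝ (Fin n)) (hω : ‖ω‖ = 1)
    (ρ R : ℝ) (hρ : 0 < ρ) (hρR : ρ ≤ R) (k : ℤ) (x : EuclideanSpace ℝ (Fin n))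
    (hx : ‖ρ⁻¹ • (x - x₀) - (k : ℝ) • ω‖ < 1)
    (s : Finset (EuclideanSpace ℝ (Fin n)))
    (hnet : ∀ v : EuclideanSpace ℝ (Fin n), ‖v‖ ≤ 1 → ∃ u ∈ s, ‖v - u‖ ≤ 1/2) :
    ∃ u ∈ s, ∃ d ∈ Finset.Icc (-2 : ℤ) 2,
      ‖R⁻¹ • (x - (x₀ + R • (u - ⟪u, ω⟫ • ω))) -
        ((⌊(k : ℝ) * ρ / R⌋ + d : ℤ) : ℝ) • ω‖ < 1 := by
  have hR : 0 < R := hρ.trans_le hρR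
  have hωω : ⟪ω, ω⟫ = 1 := by
    rw [real_inner_self_eq_norm_sq, hω]; norm_num
  set y := x - x₀ - ((k : ℝ) * ρ) • ω with hy_def
  have hy : ‖y‖ < ρ := by
    have heq : ρ⁻¹ • (x - x₀) - (k : ℝ) • ω = ρ⁻¹ • y := by
      rw [hy_def]; match_scalars <;> field_simp
    rw [heq, norm_smul, Real.norm_eq_abs, abs_of_pos (inv_pos.mpr hρ)] at hx
    calc ‖y‖ = ρ * (ρ⁻¹ * ‖y‖) := by field_simp
      _ < ρ * 1 := by exact mul_lt_mul_of_pos_left hx hρ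
      _ = ρ := mul_one ρ
  set a := ⟪y, ω⟫ with ha_def
  set w := y - a • ω with hw_def
  have hwω : ⟪w, ω⟫ = 0 := by
    rw [hw_def, inner_sub_left, real_inner_smul_left, hωω]; ring
  have ha : |a| < ρ := by
    calc |a| ≤ ‖y‖ * ‖ω‖ := abs_real_inner_le_norm y ω
      _ = ‖y‖ := by rw [hω, mul_one]
      _ < ρ := hy
  have hw : ‖w‖ ≤ ‖y‖ := by
    have hyw : y = w + a • ω := by rw [hw_def]; abel
    have hsq : ‖y‖ ^ 2 = ‖w‖ ^ 2 + a ^ 2 := by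
      rw [hyw, norm_add_sq_real, real_inner_smul_right, hwω, norm_smul, Real.norm_eq_abs,
        hω, mul_one, sq_abs]
      ring
    nlinarith [norm_nonneg w, norm_nonneg y]
  obtain ⟨u, hus, hu⟩ := hnet (R⁻¹ • w) (by
    rw [norm_smul, Real.norm_eq_abs, abs_of_pos (inv_pos.mpr hR)]
    rw [inv_mul_le_iff₀ hR, mul_one]
    exact hw.trans (hy.le.trans hρR))
  refine ⟨u, hus, ?_⟩
  set b := ⟪u, ω⟫ with hb_def
  set u' := u - b • ω with hu'_def
  have hu'ω : ⟪u', ω⟫ = 0 := by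
    rw [hu'_def, inner_sub_left, real_inner_smul_left, hωω]; ring
  set v := R⁻¹ • w - u' with hv_def
  have hvω : ⟪v, ω⟫ = 0 := by
    rw [hv_def, inner_sub_left, real_inner_smul_left, hwω, hu'ω]; ring
  have hvb : ‖v‖ ≤ 1/2 := by
    have heq : R⁻¹ • w - u = v + (-b) • ω := by rw [hv_def, hu'_def]; module
    have hsq : ‖R⁻¹ • w - u‖ ^ 2 = ‖v‖ ^ 2 + b ^ 2 := by
      rw [heq, norm_add_sq_real, real_inner_smul_right, hvω, norm_smul, Real.norm_eq_abs,
        hω, mul_one, sq_abs]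
      ring
    nlinarith [norm_nonneg v, norm_nonneg (R⁻¹ • w - u)]
  set t := ((k : ℝ) * ρ + a) / R with ht_def
  set j := ⌊t + 1/2⌋ with hj_def
  have hj1 : (j : ℝ) ≤ t + 1/2 := Int.floor_le _
  have hj2 : t - 1/2 < j := by
    have := Int.lt_floor_add_one (t + 1/2)
    linarith
  set F := ⌊(k : ℝ) * ρ / R⌋ with hF_def
  have hF1 : (F : ℝ) ≤ (k : ℝ) * ρ / R := Int.floor_le _
  have hF2 : (k : ℝ) * ρ / R < F + 1 := Int.lt_floor_add_one _
  have htF : |t - (k : ℝ) * ρ / R| < 1 := by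
    rw [ht_def]
    have : ((k : ℝ) * ρ + a) / R - (k : ℝ) * ρ / R = a / R := by ring
    rw [this, abs_div, abs_of_pos hR, div_lt_one hR]
    exact ha.trans_le hρR
  have habs := abs_lt.mp htF
  refine ⟨j - F, ?_, ?_⟩
  · rw [Finset.mem_Icc]
    constructor
    · have : (-2 : ℝ) ≤ ((j - F : ℤ) : ℝ) := by push_cast; linarith
      exact_mod_cast this
    · have h3 : ((j - F : ℤ) : ℝ) < 3 := by push_cast; linarith
      have : (j - F : ℤ) < 3 := by exact_mod_cast h3
      omega
  · have hFd : ((F + (j - F) : ℤ) : ℝ) = (j : ℝ) := by push_cast; ring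
    rw [hFd]
    have hVeq : R⁻¹ • (x - (x₀ + R • u')) - (j : ℝ) • ω = (t - j) • ω + v := by
      rw [hv_def, hw_def, hy_def, ht_def]
      match_scalars <;> field_simp <;> ring
    rw [hVeq]
    have hsq : ‖(t - j) • ω + v‖ ^ 2 = (t - j) ^ 2 + ‖v‖ ^ 2 := by
      rw [norm_add_sq_real, real_inner_smul_left, real_inner_comm, hvω, norm_smul,
        Real.norm_eq_abs, hω, mul_one, sq_abs]
      ring
    have h2 : (t - j) ^ 2 ≤ 1/4 := by nlinarith
    nlinarith [norm_nonneg ((t - j) • ω + v), norm_nonneg v]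

/-- comparison of tube norms at different scales `0 < ρ ≤ R`:
`‖f‖_{DL²_ρ} ≤ C(n) (R/ρ) ‖f‖_{DL²_R}`, with `C(n)` independent of `ρ`, `R` and `f`. -/
theorem tubeNorm_scale_comparison (n : ℕ) (hn : 1 ≤ n) :
    ∃ C : ℝ, 0 < C ∧
      ∀ (ρ R : ℝ), 0 < ρ → ρ ≤ R →
        ∀ f : EuclideanSpace ℝ (Fin n) → ℂ, MemLp f 2 volume →
          tubeNorm ρ f ≤ ENNReal.ofReal (C * (R / ρ)) * tubeNorm R f := by
  obtain ⟨s, hnet⟩ := exists_net n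
  refine ⟨10 * (s.card + 1), by positivity, ?_⟩
  intro ρ R hρ hρR f hf
  have hR : 0 < R := hρ.trans_le hρR
  have hRρ1 : (1 : ℝ) ≤ R / ρ := (one_le_div hρ).mpr hρR
  refine tubeNorm_le' fun x₀ ω hω => ?_
  set M := (⌊R/ρ⌋ + 1).toNat with hM
  set P := s ×ˢ Finset.Icc (-2 : ℤ) 2 with hP
  set T : EuclideanSpace ℝ (Fin n) → ℤ → Set (EuclideanSpace ℝ (Fin n)) :=
    fun u j => {x | ‖R⁻¹ • (x - (x₀ + R • (u - ⟪u, ω⟫ • ω))) - (j : ℝ) • ω‖ < 1} with hT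
  set a : EuclideanSpace ℝ (Fin n) → ℤ → ℝ≥0∞ :=
    fun u j => eLpNorm ((T u j).indicator f) 2 volume with ha
  have hmeas : ∀ u j, MeasurableSet (T u j) := fun u j => by
    have hc : Continuous fun x : EuclideanSpace ℝ (Fin n) =>
        ‖R⁻¹ • (x - (x₀ + R • (u - ⟪u, ω⟫ • ω))) - (j : ℝ) • ω‖ := by fun_prop
    exact (isOpen_lt hc continuous_const).measurableSet
  have step1 : ∀ k : ℤ,
      eLpNorm ({x : EuclideanSpace ℝ (Fin n) |
        ‖ρ⁻¹ • (x - x₀) - (k : ℝ) • ω‖ < 1}.indicator f) 2 volume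
      ≤ ∑ p ∈ P, a p.1 (⌊(k : ℝ) * ρ / R⌋ + p.2) := by
    intro k
    refine eLpNorm_indicator_le_sum P _ (fun p => T p.1 (⌊(k : ℝ) * ρ / R⌋ + p.2)) f ?_
      (fun p => hmeas _ _) hf.1
    intro x hx
    obtain ⟨u, hus, d, hd, hmem⟩ := tube_geom x₀ ω hω ρ R hρ hρR k x hx s hnet
    exact Set.mem_biUnion (show (u, d) ∈ P from Finset.mem_product.mpr ⟨hus, hd⟩) hmem
  have step3 : ∀ p ∈ P, (∑' k : ℤ, a p.1 (⌊(k : ℝ) * ρ / R⌋ + p.2))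
      ≤ (M : ℝ≥0∞) * tubeNorm R f := by
    intro p _
    have h1 : (∑' k : ℤ, a p.1 (⌊(k : ℝ) * ρ / R⌋ + p.2))
        ≤ (M : ℝ≥0∞) * ∑' j : ℤ, a p.1 j := by
      refine tsum_comp_le_mul (a p.1) (fun k => ⌊(k : ℝ) * ρ / R⌋ + p.2) M fun j => ?_
      obtain ⟨t, ht1, ht2⟩ := fiber_bound ρ R hρ hρR p.2 j
      exact ⟨t, ht1, ht2⟩
    have h2 : (∑' j : ℤ, a p.1 j) ≤ tubeNorm R f :=
      le_tubeNorm' R f (x₀ + R • (p.1 - ⟪p.1, ω⟫ • ω)) ω hω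
    exact h1.trans (mul_le_mul_right h2 _)
  have hcard : P.card = s.card * 5 := by
    rw [hP, Finset.card_product]
    rfl
  have hMle : (M : ℝ) ≤ 2 * (R / ρ) := by
    have h0 : (0 : ℤ) ≤ ⌊R/ρ⌋ + 1 := by
      have : (0 : ℤ) ≤ ⌊R/ρ⌋ := Int.floor_nonneg.mpr (by linarith)
      omega
    have hMZ : ((M : ℕ) : ℤ) = ⌊R/ρ⌋ + 1 := by rw [hM]; exact Int.toNat_of_nonneg h0
    have hMR : (M : ℝ) = ((⌊R/ρ⌋ : ℤ) : ℝ) + 1 := by exact_mod_cast hMZ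
    rw [hMR]
    have := Int.floor_le (R / ρ)
    linarith
  calc (∑' k : ℤ, eLpNorm ({x : EuclideanSpace ℝ (Fin n) |
        ‖ρ⁻¹ • (x - x₀) - (k : ℝ) • ω‖ < 1}.indicator f) 2 volume)
      ≤ ∑' k : ℤ, ∑ p ∈ P, a p.1 (⌊(k : ℝ) * ρ / R⌋ + p.2) :=
        ENNReal.tsum_le_tsum step1
    _ = ∑ p ∈ P, ∑' k : ℤ, a p.1 (⌊(k : ℝ) * ρ / R⌋ + p.2) :=
        Summable.tsum_finsetSum fun _ _ => ENNReal.summable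
    _ ≤ ∑ _p ∈ P, (M : ℝ≥0∞) * tubeNorm R f := Finset.sum_le_sum step3
    _ = P.card • ((M : ℝ≥0∞) * tubeNorm R f) := Finset.sum_const _
    _ ≤ ENNReal.ofReal (10 * (s.card + 1) * (R / ρ)) * tubeNorm R f := by
        rw [nsmul_eq_mul, ← mul_assoc]
        refine mul_le_mul_left ?_ _
        have : (P.card : ℝ≥0∞) * (M : ℝ≥0∞) = ((P.card * M : ℕ) : ℝ≥0∞) := by push_cast; ring
        rw [this, ← ENNReal.ofReal_natCast]
        refine ENNReal.ofReal_le_ofReal ?_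
        push_cast
        rw [hcard]
        push_cast
        nlinarith [hMle, hRρ1, Nat.cast_nonneg (α := ℝ) s.card, Nat.cast_nonneg (α := ℝ) M]
  done

end
end

section
/- Let a : ℝ → ℂ be a measurable function of finite 2-variation V, i.e. V = sup (Σ_{i=0}^{m−1} |a(t_{i+1}) − a(t_i)|²)^{1/2} over all finite increasing real sequences t₀ < t₁ < ⋯ < t_m. Then for every h > 0, ∫_{ℝ} |a(t + h) − a(t)|² dt ≤ h V². -/
open MeasureTheory ENNReal Set

noncomputable section

/-- The 2-variation norm of a function `a : ℝ → ℂ`: the supremum over all finite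
increasing real sequences `t₀ < t₁ < ⋯ < t_m` of `(Σ |a(t_{i+1}) − a(t_i)|²)^{1/2}`. -/
def V2line (a : ℝ → ℂ) : ℝ≥0∞ :=
  ⨆ (m : ℕ) (t : Fin (m + 1) → ℝ) (_ : StrictMono t),
    ENNReal.ofReal (Real.sqrt (∑ i : Fin m, ‖a (t i.succ) - a (t i.castSucc)‖ ^ 2))

/-!
Since `(0, h]` is a fundamental domain for the translations by `hℤ`,
`∫ |a(t + h) - a(t)|² dt = ∫_{(0, h]} ∑_{k ∈ ℤ} |a(x + (k + 1)h) - a(x + kh)|² dx`.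
For fixed `x` the points `x + kh` increase with `k`, so every finite part of the inner sum is
one of the sums in the definition of the 2-variation, and the inner sum is at most `V²`.
-/

def intEquivZMultiples {G : Type*} [AddCommGroup G] [IsAddTorsionFree G] {g : G} (hg : g ≠ 0) :
    ℤ ≃ AddSubgroup.zmultiples g :=
  Equiv.ofBijective (fun n => ⟨n • g, AddSubgroup.zsmul_mem_zmultiples g n⟩)
    ⟨fun _ _ hmn => smul_left_injective ℤ hg (congrArg Subtype.val hmn),
     fun ⟨_, n, hn⟩ => ⟨n, Subtype.ext hn⟩⟩

section

variable (a : ℝ → ℂ)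

theorem sum_enorm_sub_sq_le_V2line_sq {m : ℕ} {t : Fin (m + 1) → ℝ} (ht : StrictMono t) :
    ∑ i : Fin m, ‖a (t i.succ) - a (t i.castSucc)‖ₑ ^ 2 ≤ V2line a ^ 2 := by
  have hS : 0 ≤ ∑ i : Fin m, ‖a (t i.succ) - a (t i.castSucc)‖ ^ 2 := by positivity
  have hle : ENNReal.ofReal (Real.sqrt (∑ i : Fin m, ‖a (t i.succ) - a (t i.castSucc)‖ ^ 2))
      ≤ V2line a :=
    le_iSup_of_le m (le_iSup₂_of_le t ht le_rfl)
  grw [← hle, ← ENNReal.ofReal_pow (Real.sqrt_nonneg _), Real.sq_sqrt hS,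
    ENNReal.ofReal_sum_of_nonneg fun i _ => sq_nonneg _]
  simp [ENNReal.ofReal_pow, ofReal_norm]

theorem sum_range_enorm_sub_sq_le_V2line_sq {s : ℕ → ℝ} (hs : StrictMono s) (n : ℕ) :
    ∑ i ∈ Finset.range n, ‖a (s (i + 1)) - a (s i)‖ₑ ^ 2 ≤ V2line a ^ 2 := by
  simpa [Fin.sum_univ_eq_sum_range (fun i => ‖a (s (i + 1)) - a (s i)‖ₑ ^ 2) n] using
    sum_enorm_sub_sq_le_V2line_sq a (hs.comp Fin.val_strictMono) (m := n)

theorem tsum_int_enorm_sub_sq_le_V2line_sq {s : ℤ → ℝ} (hs : StrictMono s) :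
    ∑' k : ℤ, ‖a (s (k + 1)) - a (s k)‖ₑ ^ 2 ≤ V2line a ^ 2 := by
  refine tsum_le_of_sum_le' bot_le fun S => ?_
  set M : ℕ := S.sup Int.natAbs
  have hS : S ⊆ (Finset.range (2 * M + 1)).image fun i : ℕ => (i : ℤ) - M := by
    intro k hk
    have : k.natAbs ≤ M := Finset.le_sup (f := Int.natAbs) hk
    simp only [Finset.mem_image, Finset.mem_range]
    exact ⟨(k + M).toNat, by omega, by omega⟩
  have hinj : Set.InjOn (fun i : ℕ => (i : ℤ) - M) (Finset.range (2 * M + 1)) :=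
    fun i _ j _ hij => by simpa using hij
  calc ∑ k ∈ S, ‖a (s (k + 1)) - a (s k)‖ₑ ^ 2
      ≤ ∑ k ∈ (Finset.range (2 * M + 1)).image fun i : ℕ => (i : ℤ) - M,
          ‖a (s (k + 1)) - a (s k)‖ₑ ^ 2 := Finset.sum_le_sum_of_subset hS
    _ = ∑ i ∈ Finset.range (2 * M + 1), ‖a (s ((i + 1 : ℕ) - M)) - a (s (i - M))‖ₑ ^ 2 := by
      rw [Finset.sum_image hinj]
      refine Finset.sum_congr rfl fun i _ => ?_
      rw [Nat.cast_succ, sub_add_eq_add_sub]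
    _ ≤ V2line a ^ 2 :=
      sum_range_enorm_sub_sq_le_V2line_sq a (s := fun i : ℕ => s (i - M))
        (hs.comp fun i j hij => by simpa using hij) _

theorem lintegral_enorm_sub_sq_le_mul_V2line_sq (ha : Measurable a) {h : ℝ} (hh : 0 < h) :
    ∫⁻ t, ‖a (t + h) - a t‖ₑ ^ 2 ≤ ENNReal.ofReal h * V2line a ^ 2 := by
  have hF : Measurable fun t => ‖a (t + h) - a t‖ₑ ^ 2 := by fun_prop
  rw [(isAddFundamentalDomain_Ioc hh 0 volume).lintegral_eq_tsum'',
    ← lintegral_tsum (f := fun g x => ‖a ((g +ᵥ x) + h) - a (g +ᵥ x)‖ₑ ^ 2)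
      fun g => (hF.comp (measurable_const_vadd g)).aemeasurable]
  calc _ ≤ ∫⁻ _ in Ioc 0 (0 + h), V2line a ^ 2 := lintegral_mono fun x => ?_
    _ = ENNReal.ofReal h * V2line a ^ 2 := by simp [mul_comm]
  rw [← (intEquivZMultiples hh.ne').tsum_eq]
  convert tsum_int_enorm_sub_sq_le_V2line_sq a ((zsmul_left_strictMono hh).add_const x)
    using 5 with k
  simp [intEquivZMultiples, add_smul, add_right_comm]

end

/-- a measurable function `a : ℝ → ℂ` of finite 2-variation `V` satisfies
`∫_ℝ |a(t+h) − a(t)|² dt ≤ h V²` for every `h > 0` (the embedding `V² ⊂ Ḃ^{1/2}_{2,∞}`). -/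
theorem v2_second_difference_bound (a : ℝ → ℂ) (ha : Measurable a)
    (V : ℝ) (hV0 : 0 ≤ V) (hV : V2line a = ENNReal.ofReal V)
    (h : ℝ) (hh : 0 < h) :
    ∫⁻ t : ℝ, (‖a (t + h) - a t‖₊ : ℝ≥0∞) ^ 2 ≤ ENNReal.ofReal (h * V ^ 2) := by
  simpa only [enorm_eq_nnnorm, hV, ← ENNReal.ofReal_pow hV0, ← ENNReal.ofReal_mul hh.le] using
    lintegral_enorm_sub_sq_le_mul_V2line_sq a ha hh

end
end

section
/- There is an absolute constant C such that the following holds. Let a : [0,1] → ℂ be a measurable function with finite supremum norm ‖a‖_∞ and finite 2-variation norm ‖a‖_{V²}. Then for every real σ with |σ| ≥ 1, |∫₀¹ a(t) e^{itσ} dt| ≤ C |σ|^{−1/2} (‖a‖_∞ + ‖a‖_{V²}). -/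
open MeasureTheory ENNReal Set

noncomputable section

lemma iOn {F : ℝ → ℝ} (hF : Measurable F) {s : Set ℝ} (hs : MeasurableSet s)
    (hμ : volume s < ⊤) {C : ℝ} (h : ∀ x ∈ s, ‖F x‖ ≤ C) : IntegrableOn F s := by
  apply Integrable.mono' (integrableOn_const (C := C) hμ.ne) hF.aestronglyMeasurable.restrict
  exact (ae_restrict_iff' hs).mpr (Filter.Eventually.of_forall h)

lemma iiC {F : ℝ → ℂ} (hF : Measurable F) {u v C : ℝ}
    (h : ∀ x ∈ Set.uIoc u v, ‖F x‖ ≤ C) : IntervalIntegrable F volume u v := by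
  rw [intervalIntegrable_iff]
  apply Integrable.mono' (integrableOn_const (C := C) measure_Ioc_lt_top.ne) hF.aestronglyMeasurable.restrict
  exact (ae_restrict_iff' measurableSet_uIoc).mpr (Filter.Eventually.of_forall h)

lemma iiR {F : ℝ → ℝ} (hF : Measurable F) {u v C : ℝ}
    (h : ∀ x ∈ Set.uIoc u v, ‖F x‖ ≤ C) : IntervalIntegrable F volume u v := by
  rw [intervalIntegrable_iff]
  exact iOn hF measurableSet_uIoc measure_Ioc_lt_top h

lemma normexp (t σ : ℝ) : ‖Complex.exp (Complex.I * (t:ℂ) * (σ:ℂ))‖ = 1 := by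
  rw [Complex.norm_exp]
  simp [Complex.mul_re, Complex.mul_im]

lemma chain (a : ℝ → ℂ) (B : ℝ)
    (hB2 : ∀ (m : ℕ) (t : Fin (m + 1) → ℝ), StrictMono t →
      (∀ i, t i ∈ Set.Icc (0 : ℝ) 1) →
      (∑ i : Fin m, ‖a (t i.succ) - a (t i.castSucc)‖ ^ 2) ≤ B ^ 2)
    {h : ℝ} (hh0 : 0 < h) (s : ℝ) (hs : 0 ≤ s) (n : ℕ) (hn : s + n * h ≤ 1) :
    ∑ k ∈ Finset.range n, ‖a (s + (k + 1) * h) - a (s + k * h)‖ ^ 2 ≤ B ^ 2 := by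
  have := hB2 n (fun i => s + (i : ℕ) * h) ?_ ?_
  · simp only [Fin.val_succ, Fin.coe_castSucc, Nat.cast_add, Nat.cast_one] at this
    rw [← Fin.sum_univ_eq_sum_range (fun k => ‖a (s + ((k:ℝ) + 1) * h) - a (s + k * h)‖ ^ 2) n]
    exact this
  · intro i j hij
    have : (i : ℝ) < (j : ℝ) := by exact_mod_cast hij
    simp only []
    nlinarith
  · intro i
    constructor
    · positivity
    · have hi : ((i:ℕ) : ℝ) ≤ (n:ℝ) := by exact_mod_cast Fin.is_le i
      nlinarith

lemma trans_sum (a : ℝ → ℂ) (ha : Measurable a) (B : ℝ)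
    (hB2 : ∀ (m : ℕ) (t : Fin (m + 1) → ℝ), StrictMono t →
      (∀ i, t i ∈ Set.Icc (0 : ℝ) 1) →
      (∑ i : Fin m, ‖a (t i.succ) - a (t i.castSucc)‖ ^ 2) ≤ B ^ 2)
    {h : ℝ} (hh0 : 0 < h) (hh1 : h ≤ 1) :
    ∫ t in (0:ℝ)..(1-h), ‖a (t + h) - a t‖ ^ 2 ≤ h * B ^ 2 := by
  set f : ℝ → ℝ := fun t => ‖a (t + h) - a t‖ ^ 2 with hf
  have hfm : Measurable f := (((ha.comp (measurable_add_const h)).sub ha).norm.pow_const 2)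
  have hfnn : ∀ t, 0 ≤ f t := fun t => by positivity
  have hB2nn : (0:ℝ) ≤ B ^ 2 := by
    have := hB2 0 (fun _ => 0)
      (by intro i j hij; have h1 := Fin.lt_def.mp hij; have := i.isLt; have := j.isLt; omega)
      (fun i => by simp)
    simpa using this
  have hfpt : ∀ t, 0 ≤ t → t + h ≤ 1 → f t ≤ B ^ 2 := by
    intro t ht hth
    have := chain a B hB2 hh0 t ht 1 (by push_cast; linarith)
    simpa [hf] using this
  set M : ℕ := ⌈(1 - h) / h⌉₊ with hM
  set c : ℕ → ℝ := fun k => min (k * h) (1 - h) with hc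
  have hc0 : c 0 = 0 := by simp [hc]; linarith
  have hcM : c M = 1 - h := by
    have : (1 - h) ≤ M * h := by
      rw [← div_le_iff₀ hh0]; exact Nat.le_ceil _
    simp [hc, min_eq_right this]
  -- for k < M, c k = k*h and k*h ≤ 1 - h
  have hkM : ∀ k < M, (k:ℝ) * h ≤ 1 - h := by
    intro k hk
    have : (k : ℝ) < (1 - h) / h := by exact_mod_cast Nat.lt_ceil.mp hk
    have := (lt_div_iff₀ hh0).mp this
    linarith
  have hck : ∀ k < M, c k = k * h := fun k hk => min_eq_left (hkM k hk)
  set u : ℕ → ℝ := fun k => min h (1 - ((k:ℝ) + 1) * h) with hu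
  have hu0 : ∀ k < M, 0 ≤ u k := by
    intro k hk
    have := hkM k hk
    exact le_min (le_of_lt hh0) (by nlinarith)
  have huh : ∀ k, u k ≤ h := fun k => min_le_left _ _
  have hck1 : ∀ k < M, c (k+1) = k * h + u k := by
    intro k hk
    have := hkM k hk
    simp only [hc, hu]
    push_cast
    rcases le_total (((k:ℝ)+1) * h) (1-h) with h1 | h1
    · rw [min_eq_left h1, min_eq_left (by linarith)]; ring
    · rw [min_eq_right h1, min_eq_right (by linarith)]; ring
  -- integrability on pieces
  have hsub : ∀ k < M, ∀ x ∈ Set.uIoc (c k) (c (k+1)), 0 ≤ x ∧ x + h ≤ 1 := by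
    intro k hk x hx
    have h1 : c k ≤ c (k+1) := by
      rw [hck k hk, hck1 k hk]; have := hu0 k hk; linarith
    rw [Set.uIoc_of_le h1] at hx
    have hc0k : 0 ≤ c k := le_min (by positivity) (by linarith)
    have hcle : c (k+1) ≤ 1 - h := min_le_right _ _
    exact ⟨le_trans hc0k (le_of_lt hx.1), by have := hx.2; have := le_trans this hcle; linarith⟩
  have hint : ∀ k < M, IntervalIntegrable f volume (c k) (c (k+1)) := by
    intro k hk
    apply iiR hfm (C := B ^ 2)
    intro x hx
    rw [Real.norm_of_nonneg (hfnn x)]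
    exact hfpt x (hsub k hk x hx).1 (hsub k hk x hx).2
  have hsplit : ∑ k ∈ Finset.range M, ∫ x in (c k)..(c (k+1)), f x
      = ∫ t in (0:ℝ)..(1-h), f t := by
    rw [← hc0, ← hcM]
    exact intervalIntegral.sum_integral_adjacent_intervals hint
  set ind : ℕ → ℝ → ℝ := fun k => (Set.Ioc (0:ℝ) (u k)).indicator (fun y => f (y + k * h))
    with hind
  have hIoc : ∀ k < M, ∫ x in (c k)..(c (k+1)), f x = ∫ x, ind k x := by
    intro k hk
    rw [hck k hk, hck1 k hk]
    have hcomp : ∫ x in (0:ℝ)..(u k), f (x + k*h)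
        = ∫ x in ((0:ℝ)+k*h)..(u k + k*h), f x :=
      intervalIntegral.integral_comp_add_right f (k*h)
    rw [zero_add, add_comm (u k) ((k:ℝ)*h)] at hcomp
    rw [← hcomp, intervalIntegral.integral_of_le (hu0 k hk), hind,
      MeasureTheory.integral_indicator measurableSet_Ioc]
  have hIntOn : ∀ k < M, IntegrableOn (fun x => f (x + k*h)) (Set.Ioc 0 (u k)) := by
    intro k hk
    have hm : Measurable (fun x : ℝ => f (x + (k:ℝ)*h)) :=
      hfm.comp (measurable_add_const _)
    apply iOn hm measurableSet_Ioc measure_Ioc_lt_top (C := B^2)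
    intro x hx
    have hke : ((k:ℝ)+1)*h = (k:ℝ)*h + h := by ring
    have hxu := le_trans hx.2 (min_le_right h (1 - ((k:ℝ)+1)*h))
    have hkh : (0:ℝ) ≤ (k:ℝ)*h := by positivity
    rw [Real.norm_of_nonneg (hfnn _)]
    exact hfpt _ (by linarith [hx.1]) (by linarith)
  have hsum2 : ∑ k ∈ Finset.range M, ∫ x, ind k x
      = ∫ x, ∑ k ∈ Finset.range M, ind k x := by
    exact (MeasureTheory.integral_finset_sum _ (fun k hk =>
      ((hIntOn k (Finset.mem_range.mp hk)).integrable_indicator measurableSet_Ioc))).symm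
  have hpt : ∀ x, (∑ k ∈ Finset.range M, ind k x)
      ≤ (Set.Ioc (0:ℝ) h).indicator (fun _ => B^2) x := by
    intro x
    by_cases hx : x ∈ Set.Ioc (0:ℝ) h
    · rw [Set.indicator_of_mem hx]
      obtain ⟨hx0, hxh⟩ := hx
      set F : ℕ := ⌊(1 - x)/h⌋₊ with hF
      set n : ℕ := min M F with hn
      have hdnn : (0:ℝ) ≤ (1-x)/h := div_nonneg (by linarith) hh0.le
      have hmem : ∀ k : ℕ, (x ∈ Set.Ioc (0:ℝ) (u k) ↔ k + 1 ≤ F) := by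
        intro k
        rw [hF, Nat.le_floor_iff hdnn]
        constructor
        · intro hxk
          have := le_trans hxk.2 (min_le_right h (1 - ((k:ℝ)+1)*h))
          rw [le_div_iff₀ hh0]
          push_cast
          nlinarith
        · intro hkF
          rw [le_div_iff₀ hh0] at hkF
          push_cast at hkF
          exact ⟨hx0, le_min hxh (by nlinarith)⟩
      have hterm : ∀ k ∈ Finset.range M,
          ind k x = if k ∈ Finset.range n then f (x + k*h) else 0 := by
        intro k hk
        by_cases hxk : x ∈ Set.Ioc (0:ℝ) (u k)
        · have hkn : k ∈ Finset.range n := by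
            refine Finset.mem_range.mpr (lt_min_iff.mpr ⟨Finset.mem_range.mp hk, ?_⟩)
            have := (hmem k).mp hxk
            omega
          rw [hind]
          simp only []
          rw [Set.indicator_of_mem hxk, if_pos hkn]
        · have hkn : k ∉ Finset.range n := by
            intro hkn
            have h1 : k < F := lt_of_lt_of_le (Finset.mem_range.mp hkn) (min_le_right M F)
            exact hxk ((hmem k).mpr (by omega))
          rw [hind]
          simp only []
          rw [Set.indicator_of_notMem hxk, if_neg hkn]
      have hinter : Finset.range M ∩ Finset.range n = Finset.range n := by
        ext k
        simp only [Finset.mem_inter, Finset.mem_range, hn, lt_min_iff]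
        omega
      rw [Finset.sum_congr rfl hterm, Finset.sum_ite_mem, hinter]
      have hxn : x + n*h ≤ 1 := by
        have hFle : (F:ℝ) * h ≤ 1 - x := by
          have h1 := Nat.floor_le hdnn
          have h2 : (F:ℝ) * h ≤ ((1-x)/h) * h :=
            mul_le_mul_of_nonneg_right h1 hh0.le
          rwa [div_mul_cancel₀ _ hh0.ne'] at h2
        have hnF : (n:ℝ) ≤ (F:ℝ) := by exact_mod_cast Nat.cast_le.mpr (min_le_right M F)
        nlinarith
      calc ∑ k ∈ Finset.range n, f (x + k*h)
          = ∑ k ∈ Finset.range n, ‖a (x + ((k:ℝ)+1)*h) - a (x + k*h)‖^2 := by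
            apply Finset.sum_congr rfl
            intro k _
            show ‖a (x + (k:ℝ)*h + h) - a (x + (k:ℝ)*h)‖^2 = _
            rw [show x + (k:ℝ)*h + h = x + ((k:ℝ)+1)*h by ring]
        _ ≤ B^2 := chain a B hB2 hh0 x hx0.le n hxn
    · rw [Set.indicator_of_notMem hx]
      apply le_of_eq
      apply Finset.sum_eq_zero
      intro k hk
      apply Set.indicator_of_notMem
      intro hmem
      exact hx ⟨hmem.1, le_trans hmem.2 (huh k)⟩
  have hS_int : Integrable (fun x => ∑ k ∈ Finset.range M, ind k x) := by
    apply MeasureTheory.integrable_finset_sum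
    intro k hk
    exact (hIntOn k (Finset.mem_range.mp hk)).integrable_indicator measurableSet_Ioc
  have hrhs_int : Integrable ((Set.Ioc (0:ℝ) h).indicator (fun _ => B^2)) :=
    (integrableOn_const (C := B^2) measure_Ioc_lt_top.ne).integrable_indicator
      measurableSet_Ioc
  calc ∫ t in (0:ℝ)..(1-h), f t
      = ∑ k ∈ Finset.range M, ∫ x in (c k)..(c (k+1)), f x := hsplit.symm
    _ = ∑ k ∈ Finset.range M, ∫ x, ind k x :=
        Finset.sum_congr rfl (fun k hk => hIoc k (Finset.mem_range.mp hk))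
    _ = ∫ x, ∑ k ∈ Finset.range M, ind k x := hsum2
    _ ≤ ∫ x, (Set.Ioc (0:ℝ) h).indicator (fun _ => B^2) x :=
        MeasureTheory.integral_mono hS_int hrhs_int hpt
    _ = h * B^2 := by
        rw [MeasureTheory.integral_indicator_const _ measurableSet_Ioc]
        simp [Real.volume_Ioc, ENNReal.toReal_ofReal hh0.le, smul_eq_mul]
        exact Or.inl hh0.le

lemma key_pos (a : ℝ → ℂ) (ha : Measurable a) (A B : ℝ)
    (hA : ∀ t ∈ Set.Icc (0:ℝ) 1, ‖a t‖ ≤ A)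
    (hB2 : ∀ (m : ℕ) (t : Fin (m + 1) → ℝ), StrictMono t →
      (∀ i, t i ∈ Set.Icc (0 : ℝ) 1) →
      (∑ i : Fin m, ‖a (t i.succ) - a (t i.castSucc)‖ ^ 2) ≤ B ^ 2)
    (hB0 : 0 ≤ B) (σ : ℝ) (hσ : 4 ≤ σ) :
    ‖∫ t in (0:ℝ)..1, a t * Complex.exp (Complex.I * (t:ℂ) * (σ:ℂ))‖
      ≤ 2 * σ ^ (-(1:ℝ)/2) * (A + B) := by
  have hσ0 : (0:ℝ) < σ := by linarith
  set h : ℝ := Real.pi / σ with hh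
  have hh0 : 0 < h := div_pos Real.pi_pos hσ0
  have hh1 : h ≤ 1 := by
    rw [hh, div_le_one hσ0]
    linarith [Real.pi_le_four]
  have hhs : h * σ = Real.pi := div_mul_cancel₀ _ (ne_of_gt hσ0)
  have hA0 : 0 ≤ A := le_trans (norm_nonneg _) (hA 0 ⟨le_refl _, zero_le_one⟩)
  set e : ℝ → ℂ := fun t => Complex.exp (Complex.I * (t:ℂ) * (σ:ℂ)) with he
  have hem : Measurable e :=
    Complex.continuous_exp.measurable.comp
      ((Complex.measurable_ofReal.const_mul Complex.I).mul_const (σ:ℂ))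
  have hen : ∀ t, ‖e t‖ = 1 := fun t => normexp t σ
  set g : ℝ → ℂ := fun t => a t * e t with hg
  set g₁ : ℝ → ℂ := fun t => a (t + h) * e t with hg₁
  have hgm : Measurable g := ha.mul hem
  have hg₁m : Measurable g₁ := (ha.comp (measurable_add_const h)).mul hem
  have hgn : ∀ t, ‖g t‖ = ‖a t‖ := fun t => by rw [hg]; simp only []; rw [norm_mul, hen, mul_one]
  have hg₁n : ∀ t, ‖g₁ t‖ = ‖a (t+h)‖ := fun t => by
    rw [hg₁]; simp only []; rw [norm_mul, hen, mul_one]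
  have hexp : ∀ t : ℝ, e (t + h) = - e t := by
    intro t
    rw [he]
    simp only []
    have harg : Complex.I * ((t+h:ℝ):ℂ) * (σ:ℂ)
        = Complex.I * (t:ℂ) * (σ:ℂ) + (Real.pi:ℂ) * Complex.I := by
      rw [← hhs]
      push_cast
      ring
    rw [harg, Complex.exp_add, Complex.exp_pi_mul_I]
    ring
  -- integrability
  have int1 : IntervalIntegrable g volume 0 (1-h) := by
    apply iiC hgm (C := A)
    intro x hx
    rw [Set.uIoc_of_le (by linarith)] at hx
    rw [hgn]
    exact hA x ⟨hx.1.le, by linarith [hx.2]⟩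
  have int2 : IntervalIntegrable g volume (1-h) 1 := by
    apply iiC hgm (C := A)
    intro x hx
    rw [Set.uIoc_of_le (by linarith)] at hx
    rw [hgn]
    exact hA x ⟨by linarith [hx.1], hx.2⟩
  have int3 : IntervalIntegrable g₁ volume (-h) 0 := by
    apply iiC hg₁m (C := A)
    intro x hx
    rw [Set.uIoc_of_le (by linarith)] at hx
    rw [hg₁n]
    exact hA _ ⟨by linarith [hx.1], by linarith [hx.2]⟩
  have int4 : IntervalIntegrable g₁ volume 0 (1-h) := by
    apply iiC hg₁m (C := A)
    intro x hx
    rw [Set.uIoc_of_le (by linarith)] at hx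
    rw [hg₁n]
    exact hA _ ⟨by linarith [hx.1], by linarith [hx.2]⟩
  -- reflection identity
  have hI1 : ∫ t in (0:ℝ)..1, g t = - ∫ t in (-h:ℝ)..(1-h), g₁ t := by
    have hcomp : ∫ x in (-h:ℝ)..(1-h), g (x + h) = ∫ x in (-h+h:ℝ)..(1-h+h), g x :=
      intervalIntegral.integral_comp_add_right g h
    have hb1 : -h + h = (0:ℝ) := by ring
    have hb2 : 1 - h + h = (1:ℝ) := by ring
    rw [hb1, hb2] at hcomp
    rw [← hcomp]
    rw [← intervalIntegral.integral_neg]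
    apply intervalIntegral.integral_congr
    intro x _
    rw [hg, hg₁]
    simp only []
    rw [hexp]
    ring
  have e1 : ∫ t in (0:ℝ)..1, g t
      = (∫ t in (0:ℝ)..(1-h), g t) + ∫ t in (1-h:ℝ)..1, g t :=
    (intervalIntegral.integral_add_adjacent_intervals int1 int2).symm
  have e2 : ∫ t in (-h:ℝ)..(1-h), g₁ t
      = (∫ t in (-h:ℝ)..0, g₁ t) + ∫ t in (0:ℝ)..(1-h), g₁ t :=
    (intervalIntegral.integral_add_adjacent_intervals int3 int4).symm
  have hII : (∫ t in (0:ℝ)..1, g t) + (∫ t in (0:ℝ)..1, g t)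
      = (∫ t in (0:ℝ)..(1-h), (g t - g₁ t))
        + (∫ t in (1-h:ℝ)..1, g t) - ∫ t in (-h:ℝ)..0, g₁ t := by
    rw [intervalIntegral.integral_sub int1 int4]
    nth_rewrite 2 [hI1]
    rw [e1, e2]
    ring
  -- norm bounds
  have n2 : ‖∫ t in (1-h:ℝ)..1, g t‖ ≤ A * h := by
    have := intervalIntegral.norm_integral_le_of_norm_le_const (C := A)
      (f := g) (a := 1-h) (b := 1) ?_
    · rw [show |1 - (1-h)| = h by rw [abs_of_nonneg (by linarith)]; ring] at this
      exact this
    · intro x hx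
      rw [Set.uIoc_of_le (by linarith)] at hx
      rw [hgn]
      exact hA x ⟨by linarith [hx.1], hx.2⟩
  have n3 : ‖∫ t in (-h:ℝ)..0, g₁ t‖ ≤ A * h := by
    have := intervalIntegral.norm_integral_le_of_norm_le_const (C := A)
      (f := g₁) (a := -h) (b := 0) ?_
    · rw [show |(0:ℝ) - (-h)| = h by rw [abs_of_nonneg (by linarith)]; ring] at this
      exact this
    · intro x hx
      rw [Set.uIoc_of_le (by linarith)] at hx
      rw [hg₁n]
      exact hA _ ⟨by linarith [hx.1], by linarith [hx.2]⟩
  -- the difference term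
  set D : ℝ → ℝ := fun t => ‖a (t + h) - a t‖ with hD
  have hDm : Measurable D := ((ha.comp (measurable_add_const h)).sub ha).norm
  have hDb : ∀ x ∈ Set.uIoc (0:ℝ) (1-h), ‖D x‖ ≤ 2*A := by
    intro x hx
    rw [Set.uIoc_of_le (by linarith)] at hx
    rw [hD, Real.norm_of_nonneg (norm_nonneg _)]
    calc ‖a (x+h) - a x‖ ≤ ‖a (x+h)‖ + ‖a x‖ := norm_sub_le _ _
      _ ≤ A + A := add_le_add (hA _ ⟨by linarith [hx.1], by linarith [hx.2]⟩)
          (hA _ ⟨hx.1.le, by linarith [hx.2]⟩)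
      _ = 2*A := by ring
  have intD : IntervalIntegrable D volume 0 (1-h) := iiR hDm hDb
  have intD2 : IntervalIntegrable (fun t => D t ^ 2) volume 0 (1-h) := by
    apply iiR (hDm.pow_const 2) (C := (2*A)^2)
    intro x hx
    rw [Real.norm_of_nonneg (by positivity)]
    have := hDb x hx
    rw [Real.norm_of_nonneg (norm_nonneg _)] at this
    nlinarith [norm_nonneg (a (x+h) - a x)]
  have hD2sum : ∫ t in (0:ℝ)..(1-h), D t ^ 2 ≤ h * B ^ 2 :=
    trans_sum a ha B hB2 hh0 hh1
  have n1 : ‖∫ t in (0:ℝ)..(1-h), (g t - g₁ t)‖ ≤ ∫ t in (0:ℝ)..(1-h), D t := by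
    have h1 : ‖∫ t in (0:ℝ)..(1-h), (g t - g₁ t)‖
        ≤ ∫ t in (0:ℝ)..(1-h), ‖g t - g₁ t‖ :=
      intervalIntegral.norm_integral_le_integral_norm (by linarith)
    refine le_trans h1 (le_of_eq (intervalIntegral.integral_congr fun x _ => ?_))
    rw [hg, hg₁, hD]
    simp only []
    rw [show a x * e x - a (x+h) * e x = -((a (x+h) - a x) * e x) by ring, norm_neg,
      norm_mul, hen, mul_one]
  -- AM-GM step
  have hDint : ∀ ε : ℝ, 0 < ε →
      ∫ t in (0:ℝ)..(1-h), D t ≤ (1/(2*ε)) * (h * B^2) + ε/2 := by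
    intro ε hε
    have step1 : ∫ t in (0:ℝ)..(1-h), D t
        ≤ ∫ t in (0:ℝ)..(1-h), ((1/(2*ε)) * D t ^ 2 + ε/2) := by
      apply intervalIntegral.integral_mono_on (by linarith) intD
      · exact ((intD2.const_mul _).add (intervalIntegrable_const))
      · intro x _
        have hkey : 1/(2*ε) * D x^2 + ε/2 - D x = (D x - ε)^2 / (2*ε) := by
          field_simp; ring
        nlinarith [div_nonneg (sq_nonneg (D x - ε)) (by linarith : (0:ℝ) ≤ 2*ε)]
    have step2 : ∫ t in (0:ℝ)..(1-h), ((1/(2*ε)) * D t ^ 2 + ε/2)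
        = (1/(2*ε)) * (∫ t in (0:ℝ)..(1-h), D t ^ 2) + (1-h) * (ε/2) := by
      rw [intervalIntegral.integral_add (intD2.const_mul _) intervalIntegrable_const,
        intervalIntegral.integral_const_mul, intervalIntegral.integral_const,
        smul_eq_mul, sub_zero]
    rw [step2] at step1
    have : (1/(2*ε)) * (∫ t in (0:ℝ)..(1-h), D t ^ 2) ≤ (1/(2*ε)) * (h * B^2) :=
      mul_le_mul_of_nonneg_left hD2sum (by positivity)
    have h2 : (1-h) * (ε/2) ≤ ε/2 := by nlinarith
    linarith
  -- combine: 2 ‖I‖ ≤ √h B + 2 A h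
  have hnorm2 : 2 * ‖∫ t in (0:ℝ)..1, g t‖
      ≤ Real.sqrt h * B + 2 * (A * h) := by
    have habs : 2 * ‖∫ t in (0:ℝ)..1, g t‖
        = ‖(∫ t in (0:ℝ)..1, g t) + (∫ t in (0:ℝ)..1, g t)‖ := by
      rw [show (∫ t in (0:ℝ)..1, g t) + (∫ t in (0:ℝ)..1, g t)
        = (2:ℂ) * ∫ t in (0:ℝ)..1, g t by ring, norm_mul]
      simp
    have hbound : ∀ ε : ℝ, 0 < ε → 2 * ‖∫ t in (0:ℝ)..1, g t‖
        ≤ (1/(2*ε)) * (h * B^2) + ε/2 + 2 * (A * h) := by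
      intro ε hε
      rw [habs, hII]
      calc ‖(∫ t in (0:ℝ)..(1-h), (g t - g₁ t))
            + (∫ t in (1-h:ℝ)..1, g t) - ∫ t in (-h:ℝ)..0, g₁ t‖
          ≤ ‖∫ t in (0:ℝ)..(1-h), (g t - g₁ t)‖
            + ‖∫ t in (1-h:ℝ)..1, g t‖ + ‖∫ t in (-h:ℝ)..0, g₁ t‖ := by
            refine le_trans (norm_sub_le _ _) ?_
            gcongr
            exact norm_add_le _ _
        _ ≤ (∫ t in (0:ℝ)..(1-h), D t) + A*h + A*h := by
            gcongr
        _ ≤ (1/(2*ε)) * (h * B^2) + ε/2 + 2*(A*h) := by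
            have := hDint ε hε
            linarith
    by_cases hB : B = 0
    · rw [hB]
      apply _root_.le_of_forall_pos_le_add
      intro ε hε
      have := hbound (2*ε) (by linarith)
      rw [hB] at this
      ring_nf at this ⊢
      linarith
    · have hBpos : 0 < B := lt_of_le_of_ne hB0 (Ne.symm hB)
      have hεpos : 0 < Real.sqrt h * B := mul_pos (Real.sqrt_pos.mpr hh0) hBpos
      have := hbound (Real.sqrt h * B) hεpos
      have hsq : Real.sqrt h * Real.sqrt h = h := Real.mul_self_sqrt hh0.le
      have heq : (1/(2*(Real.sqrt h * B))) * (h * B^2) + (Real.sqrt h * B)/2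
          = Real.sqrt h * B := by
        field_simp
        nlinarith [hsq]
      linarith
  -- final arithmetic
  have hs2 : (2:ℝ) ≤ Real.sqrt σ := by
    rw [show (2:ℝ) = Real.sqrt 4 by
      rw [show (4:ℝ) = 2^2 by norm_num, Real.sqrt_sq (by norm_num)]]
    exact Real.sqrt_le_sqrt hσ
  have hspos : 0 < Real.sqrt σ := lt_of_lt_of_le (by norm_num) hs2
  have hrpow : σ ^ (-(1:ℝ)/2) = (Real.sqrt σ)⁻¹ := by
    rw [show -(1:ℝ)/2 = -(1/2) by ring, Real.rpow_neg hσ0.le, ← Real.sqrt_eq_rpow]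
  rw [hrpow]
  -- √h * √σ = √π ≤ 2,  h * √σ ≤ 2
  have hsqmul : Real.sqrt h * Real.sqrt σ = Real.sqrt Real.pi := by
    rw [← Real.sqrt_mul hh0.le, hhs]
  have hsqpi : Real.sqrt Real.pi ≤ 2 := by
    rw [show (2:ℝ) = Real.sqrt 4 by
      rw [show (4:ℝ) = 2^2 by norm_num, Real.sqrt_sq (by norm_num)]]
    exact Real.sqrt_le_sqrt (by linarith [Real.pi_le_four])
  have hss : Real.sqrt σ * Real.sqrt σ = σ := Real.mul_self_sqrt hσ0.le
  have hsh2 : Real.sqrt h * Real.sqrt σ ≤ 2 := by rw [hsqmul]; exact hsqpi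
  have hhle : h * Real.sqrt σ ≤ 2 := by
    have h1 : (h * Real.sqrt σ) * Real.sqrt σ = Real.pi := by
      rw [mul_assoc, hss]; exact hhs
    by_contra hcon
    push_neg at hcon
    have h2 : 2 * Real.sqrt σ < (h * Real.sqrt σ) * Real.sqrt σ :=
      mul_lt_mul_of_pos_right hcon hspos
    linarith only [h1, h2, hs2, Real.pi_le_four]
  rw [show 2 * (Real.sqrt σ)⁻¹ * (A+B) = 2*(A+B) / Real.sqrt σ by ring,
    le_div_iff₀ hspos]
  have p1 : 0 ≤ (Real.sqrt h * B + 2*(A*h) - 2*‖∫ t in (0:ℝ)..1, g t‖) * Real.sqrt σ :=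
    mul_nonneg (by linarith only [hnorm2]) hspos.le
  have p2 : 0 ≤ (2 - Real.sqrt h * Real.sqrt σ) * B :=
    mul_nonneg (by linarith only [hsh2]) hB0
  have p3 : 0 ≤ (2 - h * Real.sqrt σ) * A :=
    mul_nonneg (by linarith only [hhle]) hA0
  linarith only [p1, p2, p3, hB0, hA0]

lemma iconj (f : ℝ → ℂ) (u v : ℝ) :
    ∫ t in u..v, (starRingEnd ℂ) (f t) = (starRingEnd ℂ) (∫ t in u..v, f t) := by
  simp only [intervalIntegral]
  rw [integral_conj, integral_conj, ← map_sub]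

lemma key_all (a : ℝ → ℂ) (ha : Measurable a) (A B : ℝ)
    (hA : ∀ t ∈ Set.Icc (0:ℝ) 1, ‖a t‖ ≤ A)
    (hB2 : ∀ (m : ℕ) (t : Fin (m + 1) → ℝ), StrictMono t →
      (∀ i, t i ∈ Set.Icc (0 : ℝ) 1) →
      (∑ i : Fin m, ‖a (t i.succ) - a (t i.castSucc)‖ ^ 2) ≤ B ^ 2)
    (hB0 : 0 ≤ B) (σ : ℝ) (hσ : 1 ≤ σ) :
    ‖∫ t in (0:ℝ)..1, a t * Complex.exp (Complex.I * (t:ℂ) * (σ:ℂ))‖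
      ≤ 2 * σ ^ (-(1:ℝ)/2) * (A + B) := by
  have hσ0 : (0:ℝ) < σ := by linarith
  have hA0 : 0 ≤ A := le_trans (norm_nonneg _) (hA 0 ⟨le_refl _, zero_le_one⟩)
  have hrpow : σ ^ (-(1:ℝ)/2) = (Real.sqrt σ)⁻¹ := by
    rw [show -(1:ℝ)/2 = -(1/2) by ring, Real.rpow_neg hσ0.le, ← Real.sqrt_eq_rpow]
  rcases le_or_gt 4 σ with h4 | h4
  · exact key_pos a ha A B hA hB2 hB0 σ h4
  · have htriv : ‖∫ t in (0:ℝ)..1, a t * Complex.exp (Complex.I * (t:ℂ) * (σ:ℂ))‖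
        ≤ A := by
      have := intervalIntegral.norm_integral_le_of_norm_le_const (C := A)
        (f := fun t => a t * Complex.exp (Complex.I * (t:ℂ) * (σ:ℂ)))
        (a := 0) (b := 1) ?_
      · simpa using this
      · intro x hx
        rw [Set.uIoc_of_le (by norm_num)] at hx
        rw [norm_mul, normexp, mul_one]
        exact hA x ⟨hx.1.le, hx.2⟩
    rw [hrpow]
    have hs4 : Real.sqrt σ ≤ 2 := by
      rw [show (2:ℝ) = Real.sqrt 4 by
        rw [show (4:ℝ) = 2^2 by norm_num, Real.sqrt_sq (by norm_num)]]
      exact Real.sqrt_le_sqrt h4.le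
    have hspos : 0 < Real.sqrt σ := Real.sqrt_pos.mpr hσ0
    have hinv : (1:ℝ)/2 ≤ (Real.sqrt σ)⁻¹ := by
      rw [le_inv_comm₀ (by norm_num) hspos]
      simpa using hs4
    nlinarith [htriv]

lemma key_final (a : ℝ → ℂ) (ha : Measurable a) (A B : ℝ)
    (hA : ∀ t ∈ Set.Icc (0:ℝ) 1, ‖a t‖ ≤ A)
    (hB : ∀ (m : ℕ) (t : Fin (m + 1) → ℝ), StrictMono t →
      (∀ i, t i ∈ Set.Icc (0 : ℝ) 1) →
      Real.sqrt (∑ i : Fin m, ‖a (t i.succ) - a (t i.castSucc)‖ ^ 2) ≤ B)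
    (σ : ℝ) (hσ : 1 ≤ |σ|) :
    ‖∫ t in (0:ℝ)..1, a t * Complex.exp (Complex.I * (t:ℂ) * (σ:ℂ))‖
      ≤ 2 * |σ| ^ (-(1:ℝ)/2) * (A + B) := by
  have hB0 : 0 ≤ B := by
    have := hB 0 (fun _ => 0)
      (by intro i j hij; have h1 := Fin.lt_def.mp hij; have := i.isLt; have := j.isLt; omega)
      (fun i => by simp)
    simpa using this
  have hB2 : ∀ (m : ℕ) (t : Fin (m + 1) → ℝ), StrictMono t →
      (∀ i, t i ∈ Set.Icc (0 : ℝ) 1) →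
      (∑ i : Fin m, ‖a (t i.succ) - a (t i.castSucc)‖ ^ 2) ≤ B ^ 2 := by
    intro m t h1 h2
    have hs := hB m t h1 h2
    have hnn : (0:ℝ) ≤ ∑ i : Fin m, ‖a (t i.succ) - a (t i.castSucc)‖ ^ 2 :=
      Finset.sum_nonneg fun i _ => by positivity
    nlinarith [Real.sq_sqrt hnn, Real.sqrt_nonneg
      (∑ i : Fin m, ‖a (t i.succ) - a (t i.castSucc)‖ ^ 2)]
  rcases le_or_gt 0 σ with hσpos | hσneg
  · rw [abs_of_nonneg hσpos] at *
    exact key_all a ha A B hA hB2 hB0 σ hσ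
  · rw [abs_of_neg hσneg] at *
    set b : ℝ → ℂ := fun t => (starRingEnd ℂ) (a t) with hb
    have hbm : Measurable b := Complex.continuous_conj.measurable.comp ha
    have hbA : ∀ t ∈ Set.Icc (0:ℝ) 1, ‖b t‖ ≤ A := by
      intro t ht
      rw [hb]
      simpa using hA t ht
    have hbB2 : ∀ (m : ℕ) (t : Fin (m + 1) → ℝ), StrictMono t →
        (∀ i, t i ∈ Set.Icc (0 : ℝ) 1) →
        (∑ i : Fin m, ‖b (t i.succ) - b (t i.castSucc)‖ ^ 2) ≤ B ^ 2 := by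
      intro m t h1 h2
      have := hB2 m t h1 h2
      refine le_trans (le_of_eq (Finset.sum_congr rfl fun i _ => ?_)) this
      rw [hb]
      simp only []
      rw [← map_sub, RCLike.norm_conj]
    have hkey := key_all b hbm A B hbA hbB2 hB0 (-σ) hσ
    have hid : ∫ t in (0:ℝ)..1, b t * Complex.exp (Complex.I * (t:ℂ) * ((-σ:ℝ):ℂ))
        = (starRingEnd ℂ) (∫ t in (0:ℝ)..1, a t * Complex.exp (Complex.I * (t:ℂ) * (σ:ℂ))) := by
      rw [← iconj]
      apply intervalIntegral.integral_congr
      intro x _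
      rw [hb]
      simp only []
      rw [map_mul, ← Complex.exp_conj]
      congr 2
      simp [Complex.conj_I]
    rw [hid] at hkey
    rwa [RCLike.norm_conj] at hkey


/-- there is an absolute constant `C` such that for every measurable
`a : [0,1] → ℂ` with supremum norm at most `A` and 2-variation norm at most `B`
(over partitions of `[0,1]`), and every real `σ` with `|σ| ≥ 1`,
`|∫₀¹ a(t) e^{itσ} dt| ≤ C |σ|^{−1/2} (A + B)`; taking `A = ‖a‖_∞` and `B = ‖a‖_{V²}`
gives the bound `C |σ|^{−1/2} (‖a‖_∞ + ‖a‖_{V²})`. -/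
theorem oscillatory_integral_V2_bound :
    ∃ C : ℝ, 0 < C ∧
      ∀ a : ℝ → ℂ, Measurable a →
        ∀ A B : ℝ,
          (∀ t ∈ Set.Icc (0 : ℝ) 1, ‖a t‖ ≤ A) →
          (∀ (m : ℕ) (t : Fin (m + 1) → ℝ), StrictMono t →
            (∀ i, t i ∈ Set.Icc (0 : ℝ) 1) →
            Real.sqrt (∑ i : Fin m, ‖a (t i.succ) - a (t i.castSucc)‖ ^ 2) ≤ B) →
          ∀ σ : ℝ, 1 ≤ |σ| →
            ‖∫ t in (0 : ℝ)..1, a t * Complex.exp (Complex.I * (t : ℂ) * (σ : ℂ))‖ ≤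
              C * |σ| ^ (-(1 : ℝ) / 2) * (A + B) := by
  refine ⟨2, by norm_num, ?_⟩
  intro a ha A B hA hB σ hσ
  exact key_final a ha A B hA hB σ hσ

end
end

section
/- Let n ≥ 2. There is a constant C = C(n) such that for all real λ ≥ 1, μ ≥ 2 and all ξ ∈ ℝⁿ with |ξ| ≥ λ, Σ_{η ∈ ℤⁿ, |η| ≤ 2μ} 1/(λ + min{|⟨ξ,η⟩|, (|ξ|²|η|² − ⟨ξ,η⟩²)^{1/2}}) ≤ C μ^{n−1} log(2 + μ) / λ. -/
open MeasureTheory Set RealInnerProductSpace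

noncomputable section

/-- The lattice point `η ∈ ℤⁿ` viewed as a vector of `ℝⁿ` (with the Euclidean norm). -/
def latticeVec {n : ℕ} (η : Fin n → ℤ) : EuclideanSpace ℝ (Fin n) :=
  (EuclideanSpace.equiv (Fin n) ℝ).symm fun i => (η i : ℝ)

section Aux
variable {n : ℕ}


lemma mem_Icc_of_abs_le {x₀ r : ℝ} {m : ℤ} (h : |(m:ℝ) - x₀| ≤ r) :
    m ∈ Finset.Icc ⌈x₀ - r⌉ ⌊x₀ + r⌋ := by
  rw [abs_le] at h
  exact Finset.mem_Icc.2 ⟨Int.ceil_le.2 (by linarith [h.1]), Int.le_floor.2 (by linarith [h.2])⟩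

lemma card_Icc_le {x₀ r : ℝ} (hr : 0 ≤ r) :
    ((Finset.Icc ⌈x₀ - r⌉ ⌊x₀ + r⌋).card : ℝ) ≤ 2 * r + 1 := by
  rw [Int.card_Icc]
  have h1 : (⌊x₀ + r⌋ + 1 - ⌈x₀ - r⌉ : ℤ) ≤ ⌊2*r⌋ + 1 := by
    have h2 := Int.floor_le (x₀ + r)
    have h3 := Int.le_ceil (x₀ - r)
    have h4 : ((⌊x₀ + r⌋ - ⌈x₀ - r⌉ : ℤ) : ℝ) ≤ 2 * r := by push_cast; linarith
    have := Int.le_floor.2 h4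
    omega
  have h0 : (0:ℤ) ≤ ⌊2*r⌋ := Int.floor_nonneg.2 (by linarith)
  have h5 : ((⌊x₀ + r⌋ + 1 - ⌈x₀ - r⌉ : ℤ).toNat : ℤ) ≤ ⌊2*r⌋ + 1 := by omega
  have h6 : (((⌊x₀ + r⌋ + 1 - ⌈x₀ - r⌉ : ℤ).toNat : ℤ) : ℝ) ≤ ((⌊2*r⌋ + 1 : ℤ) : ℝ) := by
    exact_mod_cast h5
  push_cast at h6 ⊢
  linarith [Int.floor_le (2*r)]


lemma inv_one_add_le_sum (K : ℕ) : ∀ b : ℝ, 0 ≤ b →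
    1 / (1 + b) ≤ 1 / (1 + K) + ∑ k ∈ Finset.range K, (if b ≤ k + 1 then (1:ℝ) else 0) / (k + 1)^2 := by
  induction K with
  | zero =>
    intro b hb; simp only [Finset.range_zero, Finset.sum_empty, Nat.cast_zero, add_zero]
    rw [div_le_div_iff₀ (by linarith) (by norm_num)]; linarith
  | succ K ih =>
    intro b hb
    rw [Finset.sum_range_succ]
    by_cases hbK : b ≤ (K:ℝ) + 1
    · have h1 := ih b hb
      have h2 : 1 / (1 + (K:ℝ)) ≤ 1 / (1 + ((K:ℕ)+1:ℕ)) + (if b ≤ (K:ℝ) + 1 then (1:ℝ) else 0) / ((K:ℝ) + 1)^2 := by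
        rw [if_pos hbK]
        push_cast
        rw [div_add_div _ _ (by positivity) (by positivity), div_le_div_iff₀ (by positivity) (by positivity)]
        nlinarith [sq_nonneg ((K:ℝ)+1)]
      linarith
    · push_neg at hbK
      have h3 : (1:ℝ) / (1+b) ≤ 1 / (1 + ((K:ℕ)+1:ℕ)) := by
        apply one_div_le_one_div_of_le (by positivity)
        push_cast; linarith
      have h4 : (0:ℝ) ≤ ∑ k ∈ Finset.range K, (if b ≤ (k:ℝ) + 1 then (1:ℝ) else 0) / ((k:ℝ) + 1)^2 :=
        Finset.sum_nonneg fun k _ => by positivity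
      have h5 : (0:ℝ) ≤ (if b ≤ (K:ℝ) + 1 then (1:ℝ) else 0) / ((K:ℝ) + 1)^2 := by positivity
      linarith

lemma harmonic_le (K : ℕ) : ∑ k ∈ Finset.range K, (1:ℝ)/(k+1) ≤ 1 + Real.log K := by
  induction K with
  | zero => simp
  | succ K ih =>
    rw [Finset.sum_range_succ]
    rcases Nat.eq_zero_or_pos K with h | h
    · subst h; simp
    · have hK : (1:ℝ) ≤ K := by exact_mod_cast h
      have hlog : Real.log K - Real.log (K+1) ≤ -(1/((K:ℝ)+1)) := by
        have h1 : Real.log ((K:ℝ)/(K+1)) ≤ (K:ℝ)/(K+1) - 1 :=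
          Real.log_le_sub_one_of_pos (by positivity)
        rw [Real.log_div (by positivity) (by positivity)] at h1
        have h2 : (K:ℝ)/(K+1) - 1 = -(1/((K:ℝ)+1)) := by field_simp; ring
        linarith
      push_cast
      linarith

lemma card_Icc_symm (N : ℕ) : (Finset.Icc (-(N:ℤ)) (N:ℤ)).card = 2*N+1 := by
  rw [Int.card_Icc]; omega

lemma count_slab {n : ℕ} (N : ℕ) (e : Fin n → ℝ) (j : Fin n) (hj : e j ≠ 0)
    (t : ℝ) (ht : 0 ≤ t) :
    ((((Fintype.piFinset fun _ : Fin n => Finset.Icc (-(N:ℤ)) (N:ℤ))).filter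
        (fun η : Fin n → ℤ => |∑ i, e i * (η i : ℝ)| ≤ t)).card : ℝ) ≤
      (2*(N:ℝ)+1)^(n-1) * (2*t/|e j| + 1) := by
  set Box := (Fintype.piFinset fun _ : Fin n => Finset.Icc (-(N:ℤ)) (N:ℤ)) with hBox
  set T := Box.filter (fun η : Fin n → ℤ => |∑ i, e i * (η i : ℝ)| ≤ t) with hT
  set Y := (Fintype.piFinset fun i : Fin n => if i = j then ({0} : Finset ℤ) else Finset.Icc (-(N:ℤ)) (N:ℤ)) with hY
  have hmem : ∀ η ∈ T, Function.update η j 0 ∈ Y := by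
    intro η hη
    rw [Fintype.mem_piFinset]
    intro i
    by_cases hij : i = j
    · subst hij; simp [Function.update_self]
    · simp only [if_neg hij, Function.update_of_ne hij]
      exact Fintype.mem_piFinset.1 (Finset.mem_filter.1 hη).1 i
  have hcard := Finset.card_eq_sum_card_fiberwise hmem
  have hfiber : ∀ b ∈ Y, ((T.filter fun η => Function.update η j 0 = b).card : ℝ) ≤ 2*t/|e j| + 1 := by
    intro b hb
    set F := T.filter fun η => Function.update η j 0 = b with hF
    have hinj : Set.InjOn (fun η : Fin n → ℤ => η j) F := by
      intro η hη η' hη' hjj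
      have h1 : Function.update η j 0 = b := (Finset.mem_filter.1 hη).2
      have h2 : Function.update η' j 0 = b := (Finset.mem_filter.1 hη').2
      funext i
      by_cases hij : i = j
      · subst hij; exact hjj
      · have := congrFun (h1.trans h2.symm) i
        simpa [Function.update_of_ne hij] using this
    have hcard2 : F.card = (F.image fun η => η j).card := (Finset.card_image_of_injOn hinj).symm
    set c : ℝ := ∑ i ∈ Finset.univ.erase j, e i * (b i : ℝ) with hc
    have hsub : F.image (fun η => η j) ⊆ Finset.Icc ⌈(-c/e j) - t/|e j|⌉ ⌊(-c/e j) + t/|e j|⌋ := by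
      intro m hm
      obtain ⟨η, hη, hm⟩ := Finset.mem_image.1 hm
      apply mem_Icc_of_abs_le
      have hηT : η ∈ T := (Finset.mem_filter.1 hη).1
      have hbd : |∑ i, e i * (η i : ℝ)| ≤ t := (Finset.mem_filter.1 hηT).2
      have hub : Function.update η j 0 = b := (Finset.mem_filter.1 hη).2
      have hsum : ∑ i, e i * (η i : ℝ) = e j * m + c := by
        rw [hc, ← Finset.sum_erase_add _ _ (Finset.mem_univ j), hm]
        rw [add_comm]
        congr 1
        apply Finset.sum_congr rfl
        intro i hi
        have hij := (Finset.mem_erase.1 hi).1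
        have := congrFun hub i
        rw [Function.update_of_ne hij] at this
        rw [this]
      have habs : |e j * (m:ℝ) + c| ≤ t := hsum ▸ hbd
      have hej : (0:ℝ) < |e j| := abs_pos.2 hj
      have heq : (m:ℝ) - (-c/e j) = (e j * (m:ℝ) + c) / e j := by field_simp; ring
      rw [heq, abs_div]
      gcongr
    calc (F.card : ℝ) = ((F.image fun η => η j).card : ℝ) := by exact_mod_cast hcard2
      _ ≤ ((Finset.Icc ⌈(-c/e j) - t/|e j|⌉ ⌊(-c/e j) + t/|e j|⌋).card : ℝ) := by
          exact_mod_cast Finset.card_le_card hsub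
      _ ≤ 2 * (t/|e j|) + 1 := card_Icc_le (by positivity)
      _ = 2*t/|e j| + 1 := by ring
  have hYcard : (Y.card : ℝ) = (2*(N:ℝ)+1)^(n-1) := by
    rw [hY, Fintype.card_piFinset]
    rw [← Finset.prod_erase_mul _ _ (Finset.mem_univ j)]
    rw [if_pos rfl]
    simp only [Finset.card_singleton, mul_one]
    rw [Finset.prod_congr rfl (fun i hi => by rw [if_neg (Finset.mem_erase.1 hi).1, card_Icc_symm])]
    rw [Finset.prod_const]
    rw [Finset.card_erase_of_mem (Finset.mem_univ j), Finset.card_univ, Fintype.card_fin]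
    push_cast
    ring_nf
  calc (T.card : ℝ) = ∑ b ∈ Y, ((T.filter fun η => Function.update η j 0 = b).card : ℝ) := by
        exact_mod_cast hcard
    _ ≤ ∑ _b ∈ Y, (2*t/|e j| + 1) := Finset.sum_le_sum hfiber
    _ = (Y.card : ℝ) * (2*t/|e j| + 1) := by rw [Finset.sum_const, nsmul_eq_mul]
    _ = (2*(N:ℝ)+1)^(n-1) * (2*t/|e j| + 1) := by rw [hYcard]

lemma count_cyl {n : ℕ} (N : ℕ) (e : Fin n → ℝ) (j : Fin n) (hj : e j ≠ 0)
    (t : ℝ) (ht : 0 ≤ t) :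
    ((((Fintype.piFinset fun _ : Fin n => Finset.Icc (-(N:ℤ)) (N:ℤ))).filter
        (fun η : Fin n → ℤ => ∀ i, i ≠ j → |e j * (η i : ℝ) - e i * (η j : ℝ)| ≤ t)).card : ℝ) ≤
      (2*(N:ℝ)+1) * (2*t/|e j| + 1)^(n-1) := by
  have hej : (0:ℝ) < |e j| := abs_pos.2 hj
  set r := t/|e j| with hr
  have hr0 : 0 ≤ r := by positivity
  set Box := (Fintype.piFinset fun _ : Fin n => Finset.Icc (-(N:ℤ)) (N:ℤ)) with hBox
  set T := Box.filter (fun η : Fin n → ℤ => ∀ i, i ≠ j → |e j * (η i : ℝ) - e i * (η j : ℝ)| ≤ t) with hT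
  have hmem : ∀ η ∈ T, η j ∈ Finset.Icc (-(N:ℤ)) (N:ℤ) := fun η hη =>
    Fintype.mem_piFinset.1 (Finset.mem_filter.1 hη).1 j
  have hcard := Finset.card_eq_sum_card_fiberwise hmem
  have hfiber : ∀ m ∈ Finset.Icc (-(N:ℤ)) (N:ℤ),
      ((T.filter fun η => η j = m).card : ℝ) ≤ (2*r + 1)^(n-1) := by
    intro m hm
    set g : Fin n → Finset ℤ := fun i =>
      if i = j then ({m} : Finset ℤ) else Finset.Icc ⌈(e i * m / e j) - r⌉ ⌊(e i * m / e j) + r⌋ with hg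
    have hsub : (T.filter fun η => η j = m) ⊆ Fintype.piFinset g := by
      intro η hη
      obtain ⟨hηT, hηm⟩ := Finset.mem_filter.1 hη
      rw [Fintype.mem_piFinset]
      intro i
      by_cases hij : i = j
      · subst hij; simp [hg, hηm]
      · rw [hg]; simp only [if_neg hij]
        apply mem_Icc_of_abs_le
        have hbd := (Finset.mem_filter.1 hηT).2 i hij
        rw [hηm] at hbd
        have heq : (η i:ℝ) - e i * m / e j = (e j * (η i:ℝ) - e i * m) / e j := by
          field_simp
        rw [heq, abs_div, hr]
        gcongr
    calc ((T.filter fun η => η j = m).card : ℝ) ≤ ((Fintype.piFinset g).card : ℝ) := by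
          exact_mod_cast Finset.card_le_card hsub
      _ = ∏ i, ((g i).card : ℝ) := by rw [Fintype.card_piFinset]; push_cast; rfl
      _ = ∏ i ∈ Finset.univ.erase j, ((g i).card : ℝ) := by
          rw [← Finset.prod_erase_mul _ _ (Finset.mem_univ j)]
          have : g j = {m} := by rw [hg]; simp
          rw [this]; simp
      _ ≤ ∏ _i ∈ Finset.univ.erase j, (2*r+1) := by
          apply Finset.prod_le_prod (fun i _ => by positivity)
          intro i hi
          have hij := (Finset.mem_erase.1 hi).1
          have : g i = Finset.Icc ⌈(e i * m / e j) - r⌉ ⌊(e i * m / e j) + r⌋ := by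
            rw [hg]; simp [hij]
          rw [this]
          exact card_Icc_le hr0
      _ = (2*r+1)^(n-1) := by
          rw [Finset.prod_const, Finset.card_erase_of_mem (Finset.mem_univ j),
            Finset.card_univ, Fintype.card_fin]
  calc (T.card : ℝ) = ∑ m ∈ Finset.Icc (-(N:ℤ)) (N:ℤ), ((T.filter fun η => η j = m).card : ℝ) := by
        exact_mod_cast hcard
    _ ≤ ∑ _m ∈ Finset.Icc (-(N:ℤ)) (N:ℤ), (2*r+1)^(n-1) := Finset.sum_le_sum hfiber
    _ = ((Finset.Icc (-(N:ℤ)) (N:ℤ)).card : ℝ) * (2*r+1)^(n-1) := by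
        rw [Finset.sum_const, nsmul_eq_mul]
    _ = (2*(N:ℝ)+1) * (2*t/|e j| + 1)^(n-1) := by
        rw [card_Icc_symm]
        push_cast
        rw [hr]
        ring_nf


lemma sum_sq_eq_one (e : EuclideanSpace ℝ (Fin n)) (he : ‖e‖ = 1) : ∑ j, (e j)^2 = 1 := by
  have h0 : ∑ j, (e j)^2 = ∑ j, ‖e j‖^2 := by
    exact Finset.sum_congr rfl fun j _ => by rw [Real.norm_eq_abs, sq_abs]
  have := EuclideanSpace.norm_eq e
  rw [he] at this
  nlinarith [Real.sq_sqrt (Finset.sum_nonneg fun j (_ : j ∈ Finset.univ) => sq_nonneg ‖e j‖)]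

lemma exists_big_coord (hn : 0 < n) (e : EuclideanSpace ℝ (Fin n)) (he : ‖e‖ = 1) :
    ∃ j, 1/Real.sqrt n ≤ |e j| := by
  have h1 := sum_sq_eq_one e he
  by_contra hc
  push_neg at hc
  have hn' : (0:ℝ) < n := by exact_mod_cast hn
  have hlt : ∀ j, (e j)^2 < 1/n := by
    intro j
    have h2 := hc j
    have h3 : (0:ℝ) ≤ |e j| := abs_nonneg _
    have h4 : (e j)^2 = |e j|^2 := (sq_abs _).symm
    have h5 : (1/Real.sqrt n)^2 = 1/n := by
      rw [div_pow, one_pow, Real.sq_sqrt hn'.le]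
    nlinarith [Real.sqrt_pos.2 hn']
  have : ∑ j, (e j)^2 < ∑ _j : Fin n, (1:ℝ)/n :=
    Finset.sum_lt_sum_of_nonempty (Finset.univ_nonempty_iff.2 ⟨⟨0, hn⟩⟩) fun j _ => hlt j
  rw [Finset.sum_const, Finset.card_univ, Fintype.card_fin, nsmul_eq_mul] at this
  rw [h1] at this
  have : (n:ℝ) * (1/n) = 1 := by field_simp
  linarith

lemma wedge_coord_le (e x : EuclideanSpace ℝ (Fin n)) (he : ‖e‖ = 1) (i j : Fin n) (hij : i ≠ j) :
    |e j * x i - e i * x j| ≤ Real.sqrt (‖x‖^2 - ⟪e, x⟫^2) := by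
  set w : EuclideanSpace ℝ (Fin n) := EuclideanSpace.single i (e j) - EuclideanSpace.single j (e i) with hw
  have hxw : ⟪x, w⟫ = e j * x i - e i * x j := by
    rw [hw, inner_sub_right, EuclideanSpace.inner_single_right, EuclideanSpace.inner_single_right]
    simp [mul_comm]
  have hew : ⟪e, w⟫ = 0 := by
    rw [hw, inner_sub_right, EuclideanSpace.inner_single_right, EuclideanSpace.inner_single_right]
    simp [mul_comm]
  have hnw : ‖w‖ ≤ 1 := by
    have hsq : ⟪w, w⟫ = (e j)^2 + (e i)^2 := by
      rw [hw, inner_sub_left, inner_sub_right, inner_sub_right,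
        EuclideanSpace.inner_single_left, EuclideanSpace.inner_single_left,
        EuclideanSpace.inner_single_left, EuclideanSpace.inner_single_left]
      simp [EuclideanSpace.single_apply, hij, (Ne.symm hij : j ≠ i)]
      ring
    have hle : (e j)^2 + (e i)^2 ≤ 1 := by
      have hp := Finset.sum_pair (f := fun k => (e k)^2) (Ne.symm hij)
      have hs : ∑ k ∈ ({j, i} : Finset (Fin n)), (e k)^2 ≤ ∑ k, (e k)^2 :=
        Finset.sum_le_sum_of_subset_of_nonneg (Finset.subset_univ _)
          fun k _ _ => sq_nonneg _
      rw [hp] at hs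
      rw [← sum_sq_eq_one e he]
      exact hs
    have h6 : ‖w‖^2 ≤ 1 := by rw [← real_inner_self_eq_norm_sq]; linarith
    nlinarith [norm_nonneg w]
  have hkey : ⟪x, w⟫ = ⟪x - ⟪e,x⟫ • e, w⟫ := by
    rw [inner_sub_left, real_inner_smul_left, hew, mul_zero, sub_zero]
  have hproj : ‖x - ⟪e,x⟫ • e‖^2 = ‖x‖^2 - ⟪e,x⟫^2 := by
    rw [norm_sub_sq_real, norm_smul, real_inner_smul_right]
    simp [he, real_inner_comm x e]
    ring_nf
  calc |e j * x i - e i * x j| = |⟪x - ⟪e,x⟫ • e, w⟫| := by rw [← hkey, hxw]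
    _ ≤ ‖x - ⟪e,x⟫ • e‖ * ‖w‖ := abs_real_inner_le_norm _ _
    _ ≤ ‖x - ⟪e,x⟫ • e‖ * 1 := by gcongr
    _ = Real.sqrt (‖x‖^2 - ⟪e,x⟫^2) := by
        rw [mul_one, ← hproj, Real.sqrt_sq_eq_abs, abs_norm]

end Aux

lemma abs_coord_le_norm {n : ℕ} (x : EuclideanSpace ℝ (Fin n)) (i : Fin n) : |x i| ≤ ‖x‖ := by
  rw [EuclideanSpace.norm_eq]
  rw [show |x i| = Real.sqrt (‖x i‖^2) by rw [Real.sqrt_sq_eq_abs, Real.norm_eq_abs, abs_abs]]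
  apply Real.sqrt_le_sqrt
  exact Finset.single_le_sum (fun k (_ : k ∈ Finset.univ) => sq_nonneg ‖x k‖) (Finset.mem_univ i)

lemma inner_latticeVec {n : ℕ} (e : EuclideanSpace ℝ (Fin n)) (η : Fin n → ℤ) :
    ⟪e, latticeVec η⟫ = ∑ i, e i * (η i : ℝ) := by
  simp [latticeVec, PiLp.inner_apply, RCLike.inner_apply]
  exact Finset.sum_congr rfl fun _ _ => mul_comm _ _

set_option maxHeartbeats 2000000 in
/-- for `n ≥ 2` there is `C = C(n)` such that for all `λ ≥ 1`, `μ ≥ 2`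
and `ξ ∈ ℝⁿ` with `|ξ| ≥ λ`,
`Σ_{η ∈ ℤⁿ, |η| ≤ 2μ} 1/(λ + min(|⟨ξ,η⟩|, |ξ ∧ η|)) ≤ C μ^{n−1} log(2+μ)/λ`,
where `|ξ ∧ η| = (|ξ|²|η|² − ⟨ξ,η⟩²)^{1/2}`. -/
theorem lattice_sum_bound (n : ℕ) (hn : 2 ≤ n) :
    ∃ C : ℝ, 0 < C ∧
      ∀ (lam μ : ℝ), 1 ≤ lam → 2 ≤ μ →
        ∀ ξ : EuclideanSpace ℝ (Fin n), lam ≤ ‖ξ‖ →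
          (∑' η : Fin n → ℤ,
            if ‖latticeVec η‖ ≤ 2 * μ then
              1 / (lam + min |⟪ξ, latticeVec η⟫|
                (Real.sqrt (‖ξ‖ ^ 2 * ‖latticeVec η‖ ^ 2 - ⟪ξ, latticeVec η⟫ ^ 2)))
            else 0) ≤
          C * μ ^ (n - 1) * Real.log (2 + μ) / lam := by
  set D : ℝ := 2 * Real.sqrt n + 1 with hD
  have hD1 : 1 ≤ D := by
    have : 0 ≤ Real.sqrt n := Real.sqrt_nonneg _
    linarith
  refine ⟨6^(n-1)*(2+6*D) + 2*6^(n-1) + 18*(2*D)^(n-1)*3^(n-2), by positivity, ?_⟩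
  intro lam μ hlam hμ ξ hξ
  have hξ0 : (0:ℝ) < ‖ξ‖ := lt_of_lt_of_le (by linarith) hξ
  set e : EuclideanSpace ℝ (Fin n) := ‖ξ‖⁻¹ • ξ with he_def
  have he : ‖e‖ = 1 := by
    rw [he_def, norm_smul, norm_inv, norm_norm, inv_mul_cancel₀ hξ0.ne']
  obtain ⟨j, hj⟩ := exists_big_coord (by omega) e he
  have hn0 : (0:ℝ) < n := by exact_mod_cast Nat.lt_of_lt_of_le (by norm_num) hn
  have hsn : (0:ℝ) < Real.sqrt n := Real.sqrt_pos.2 hn0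
  have hej0 : (0:ℝ) < |e j| := lt_of_lt_of_le (by positivity) hj
  have hejne : e j ≠ 0 := fun h => by simp [h] at hej0
  -- bound the count factor
  have hcf : ∀ t : ℝ, 0 ≤ t → 2*t/|e j| + 1 ≤ D*(t+1) := by
    intro t ht
    have h1 : 2*t/|e j| ≤ 2*t*Real.sqrt n := by
      rw [div_le_iff₀ hej0]
      have h2 : 1 ≤ Real.sqrt n * |e j| := by
        calc (1:ℝ) = Real.sqrt n * (1/Real.sqrt n) := by field_simp
          _ ≤ Real.sqrt n * |e j| := by gcongr
      nlinarith
    nlinarith [hsn.le, ht]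
  set N : ℕ := ⌈2*μ⌉₊ with hNdef
  have hN1 : 2*μ ≤ N := Nat.le_ceil _
  have hN2 : (N:ℝ) ≤ 2*μ+1 := le_of_lt (Nat.ceil_lt_add_one (by linarith))
  have hN4 : (4:ℝ) ≤ N := by linarith
  set Box : Finset (Fin n → ℤ) := Fintype.piFinset fun _ : Fin n => Finset.Icc (-(N:ℤ)) (N:ℤ) with hBoxdef
  set S : Finset (Fin n → ℤ) := Box.filter (fun η => ‖latticeVec η‖ ≤ 2*μ) with hSdef
  set a : (Fin n → ℤ) → ℝ := fun η => |⟪e, latticeVec η⟫| with ha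
  set b : (Fin n → ℤ) → ℝ := fun η => Real.sqrt (‖latticeVec η‖^2 - ⟪e, latticeVec η⟫^2) with hb
  -- membership in the box
  have hbox_mem : ∀ η : Fin n → ℤ, ‖latticeVec η‖ ≤ 2*μ → η ∈ Box := by
    intro η hη
    rw [hBoxdef, Fintype.mem_piFinset]
    intro i
    have h1 : |(η i : ℝ)| ≤ 2*μ := le_trans (abs_coord_le_norm (latticeVec η) i) hη
    have h2 : |η i| ≤ (N:ℤ) := by
      have : (|η i| : ℝ) ≤ N := by push_cast; exact le_trans h1 hN1
      exact_mod_cast this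
    rw [Finset.mem_Icc]
    constructor <;> [linarith [abs_le.1 h2 |>.1]; linarith [abs_le.1 h2 |>.2]]
  -- step 1: tsum is a finite sum over the box
  have hstep1 : (∑' η : Fin n → ℤ,
      if ‖latticeVec η‖ ≤ 2 * μ then
        1 / (lam + min |⟪ξ, latticeVec η⟫|
          (Real.sqrt (‖ξ‖ ^ 2 * ‖latticeVec η‖ ^ 2 - ⟪ξ, latticeVec η⟫ ^ 2)))
      else 0) =
      ∑ η ∈ S, 1 / (lam + min |⟪ξ, latticeVec η⟫|
          (Real.sqrt (‖ξ‖ ^ 2 * ‖latticeVec η‖ ^ 2 - ⟪ξ, latticeVec η⟫ ^ 2))) := by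
    rw [tsum_eq_sum (s := Box) ?_]
    · rw [hSdef, Finset.sum_filter]
    · intro η hη
      rw [if_neg (fun hc => hη (hbox_mem η hc))]
  -- step 2: pointwise bound by the normalized quantities
  have hstep2 : ∀ η ∈ S,
      1 / (lam + min |⟪ξ, latticeVec η⟫|
          (Real.sqrt (‖ξ‖ ^ 2 * ‖latticeVec η‖ ^ 2 - ⟪ξ, latticeVec η⟫ ^ 2))) ≤
      (1/lam) * (1/(1 + a η) + 1/(1 + b η)) := by
    intro η _
    have hinner : ⟪ξ, latticeVec η⟫ = ‖ξ‖ * ⟪e, latticeVec η⟫ := by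
      rw [he_def, real_inner_smul_left]
      field_simp
    have hab : (0:ℝ) ≤ a η := abs_nonneg _
    have hbb : (0:ℝ) ≤ b η := Real.sqrt_nonneg _
    have h1 : |⟪ξ, latticeVec η⟫| = ‖ξ‖ * a η := by
      rw [hinner, abs_mul, abs_of_pos hξ0]
    have h2 : Real.sqrt (‖ξ‖ ^ 2 * ‖latticeVec η‖ ^ 2 - ⟪ξ, latticeVec η⟫ ^ 2) = ‖ξ‖ * b η := by
      rw [hinner, mul_pow, show ‖ξ‖^2 * ‖latticeVec η‖^2 - ‖ξ‖^2 * ⟪e, latticeVec η⟫^2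
        = ‖ξ‖^2 * (‖latticeVec η‖^2 - ⟪e, latticeVec η⟫^2) by ring,
        Real.sqrt_mul (sq_nonneg _), Real.sqrt_sq hξ0.le]
    have hmin : min |⟪ξ, latticeVec η⟫|
        (Real.sqrt (‖ξ‖ ^ 2 * ‖latticeVec η‖ ^ 2 - ⟪ξ, latticeVec η⟫ ^ 2))
        = ‖ξ‖ * min (a η) (b η) := by
      rw [h1, h2, mul_min_of_nonneg _ _ hξ0.le]
    have hmin0 : 0 ≤ min (a η) (b η) := le_min hab hbb
    have h3 : lam * (1 + min (a η) (b η)) ≤ lam + ‖ξ‖ * min (a η) (b η) := by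
      have : lam * min (a η) (b η) ≤ ‖ξ‖ * min (a η) (b η) := by gcongr
      nlinarith
    have h4 : 1 / (lam + min |⟪ξ, latticeVec η⟫|
        (Real.sqrt (‖ξ‖ ^ 2 * ‖latticeVec η‖ ^ 2 - ⟪ξ, latticeVec η⟫ ^ 2))) ≤
        1 / (lam * (1 + min (a η) (b η))) := by
      rw [hmin]
      apply one_div_le_one_div_of_le
      · positivity
      · exact h3
    have h5 : 1 / (lam * (1 + min (a η) (b η))) = (1/lam) * (1/(1 + min (a η) (b η))) := by
      field_simp
    have h6 : 1/(1 + min (a η) (b η)) ≤ 1/(1 + a η) + 1/(1 + b η) := by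
      rcases min_choice (a η) (b η) with hc | hc <;> rw [hc]
      · have : (0:ℝ) ≤ 1/(1 + b η) := by positivity
        linarith
      · have : (0:ℝ) ≤ 1/(1 + a η) := by positivity
        linarith
    calc 1 / (lam + _) ≤ 1 / (lam * (1 + min (a η) (b η))) := h4
      _ = (1/lam) * (1/(1 + min (a η) (b η))) := h5
      _ ≤ (1/lam) * (1/(1 + a η) + 1/(1 + b η)) := by
          apply mul_le_mul_of_nonneg_left h6 (by positivity)
  -- summation by parts
  have hSBP : ∀ F : (Fin n → ℤ) → ℝ, (∀ η, 0 ≤ F η) →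
      ∑ η ∈ S, 1/(1+F η) ≤ (S.card:ℝ)/(1+(N:ℝ)) +
        ∑ k ∈ Finset.range N, ((S.filter (fun η => F η ≤ (k:ℝ)+1)).card : ℝ)/((k:ℝ)+1)^2 := by
    intro F hF
    calc ∑ η ∈ S, 1/(1+F η)
        ≤ ∑ η ∈ S, (1/(1+(N:ℝ)) +
            ∑ k ∈ Finset.range N, (if F η ≤ (k:ℝ)+1 then (1:ℝ) else 0)/((k:ℝ)+1)^2) :=
          Finset.sum_le_sum fun η _ => inv_one_add_le_sum N (F η) (hF η)
      _ = (S.card:ℝ) * (1/(1+(N:ℝ))) +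
            ∑ η ∈ S, ∑ k ∈ Finset.range N, (if F η ≤ (k:ℝ)+1 then (1:ℝ) else 0)/((k:ℝ)+1)^2 := by
          rw [Finset.sum_add_distrib, Finset.sum_const, nsmul_eq_mul]
      _ = (S.card:ℝ)/(1+(N:ℝ)) +
            ∑ k ∈ Finset.range N, ∑ η ∈ S, (if F η ≤ (k:ℝ)+1 then (1:ℝ) else 0)/((k:ℝ)+1)^2 := by
          rw [Finset.sum_comm, mul_one_div]
      _ = (S.card:ℝ)/(1+(N:ℝ)) +
            ∑ k ∈ Finset.range N, ((S.filter (fun η => F η ≤ (k:ℝ)+1)).card : ℝ)/((k:ℝ)+1)^2 := by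
          congr 1
          apply Finset.sum_congr rfl
          intro k _
          rw [← Finset.sum_div, Finset.sum_boole]
  -- counting bounds
  have hcountA : ∀ k : ℕ, ((S.filter fun η => a η ≤ (k:ℝ)+1).card : ℝ) ≤
      (2*(N:ℝ)+1)^(n-1) * (D*(((k:ℝ)+1)+1)) := by
    intro k
    have hk1 : (0:ℝ) ≤ (k:ℝ)+1 := by positivity
    have hsub : (S.filter fun η => a η ≤ (k:ℝ)+1) ⊆
        Box.filter (fun η : Fin n → ℤ => |∑ i, e i * (η i : ℝ)| ≤ (k:ℝ)+1) := by
      intro η hη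
      obtain ⟨hη1, hη2⟩ := Finset.mem_filter.1 hη
      refine Finset.mem_filter.2 ⟨(Finset.mem_filter.1 hη1).1, ?_⟩
      rw [← inner_latticeVec]
      exact hη2
    calc ((S.filter fun η => a η ≤ (k:ℝ)+1).card : ℝ)
        ≤ ((Box.filter (fun η : Fin n → ℤ => |∑ i, e i * (η i : ℝ)| ≤ (k:ℝ)+1)).card : ℝ) := by
          exact_mod_cast Finset.card_le_card hsub
      _ ≤ (2*(N:ℝ)+1)^(n-1) * (2*((k:ℝ)+1)/|e j| + 1) := count_slab N (fun i => e i) j hejne _ hk1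
      _ ≤ (2*(N:ℝ)+1)^(n-1) * (D*(((k:ℝ)+1)+1)) := by
          gcongr
          exact hcf _ hk1
  have hcountB : ∀ k : ℕ, ((S.filter fun η => b η ≤ (k:ℝ)+1).card : ℝ) ≤
      (2*(N:ℝ)+1) * (D*(((k:ℝ)+1)+1))^(n-1) := by
    intro k
    have hk1 : (0:ℝ) ≤ (k:ℝ)+1 := by positivity
    have hsub : (S.filter fun η => b η ≤ (k:ℝ)+1) ⊆
        Box.filter (fun η : Fin n → ℤ => ∀ i, i ≠ j → |e j * (η i : ℝ) - e i * (η j : ℝ)| ≤ (k:ℝ)+1) := by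
      intro η hη
      obtain ⟨hη1, hη2⟩ := Finset.mem_filter.1 hη
      refine Finset.mem_filter.2 ⟨(Finset.mem_filter.1 hη1).1, ?_⟩
      intro i hij
      have hw := wedge_coord_le e (latticeVec η) he i j hij
      exact le_trans hw hη2
    calc ((S.filter fun η => b η ≤ (k:ℝ)+1).card : ℝ)
        ≤ ((Box.filter (fun η : Fin n → ℤ => ∀ i, i ≠ j →
            |e j * (η i : ℝ) - e i * (η j : ℝ)| ≤ (k:ℝ)+1)).card : ℝ) := by
          exact_mod_cast Finset.card_le_card hsub
      _ ≤ (2*(N:ℝ)+1) * (2*((k:ℝ)+1)/|e j| + 1)^(n-1) := count_cyl N (fun i => e i) j hejne _ hk1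
      _ ≤ (2*(N:ℝ)+1) * (D*(((k:ℝ)+1)+1))^(n-1) := by
          gcongr
          exact hcf _ hk1
  -- abbreviations
  set P : ℝ := (2*(N:ℝ)+1)^(n-1) with hP
  have hP0 : (0:ℝ) < P := by positivity
  set L : ℝ := 1 + Real.log N with hL
  have hlogN0 : (0:ℝ) ≤ Real.log N := Real.log_nonneg (by linarith)
  have hL1 : (1:ℝ) ≤ L := by rw [hL]; linarith
  have hBoxcard : ((Box.card : ℝ)) = (2*(N:ℝ)+1)^n := by
    rw [hBoxdef, Fintype.card_piFinset]
    push_cast [card_Icc_symm]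
    rw [Finset.prod_const, Finset.card_univ, Fintype.card_fin]
  have hScard : (S.card : ℝ) ≤ P * (2*(N:ℝ)+1) := by
    have h1 : (S.card : ℝ) ≤ (Box.card : ℝ) := by
      exact_mod_cast Finset.card_le_card (Finset.filter_subset _ _)
    rw [hBoxcard] at h1
    have h2 : (2*(N:ℝ)+1)^n = P * (2*(N:ℝ)+1) := by
      rw [hP, ← pow_succ]
      congr 1
      omega
    linarith
  have hdivS : (S.card:ℝ)/(1+(N:ℝ)) ≤ 2*P := by
    rw [div_le_iff₀ (by positivity)]
    have h1 : (2*(N:ℝ)+1) ≤ 2*(1+(N:ℝ)) := by linarith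
    calc (S.card:ℝ) ≤ P * (2*(N:ℝ)+1) := hScard
      _ ≤ P * (2*(1+(N:ℝ))) := by gcongr
      _ = 2*P*(1+(N:ℝ)) := by ring
  have hHarm := harmonic_le N
  -- bound for the parallel sum
  have hA : ∑ η ∈ S, 1/(1 + a η) ≤ 2*P + 2*D*P*L := by
    have h1 := hSBP a (fun η => abs_nonneg _)
    have h2 : ∑ k ∈ Finset.range N, ((S.filter (fun η => a η ≤ (k:ℝ)+1)).card : ℝ)/((k:ℝ)+1)^2 ≤
        ∑ k ∈ Finset.range N, 2*D*P/((k:ℝ)+1) := by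
      apply Finset.sum_le_sum
      intro k _
      have h3 := hcountA k
      have h4 : ((S.filter (fun η => a η ≤ (k:ℝ)+1)).card : ℝ)/((k:ℝ)+1)^2 ≤
          (P * (D*(((k:ℝ)+1)+1)))/((k:ℝ)+1)^2 := by gcongr
      refine h4.trans ?_
      rw [div_le_div_iff₀ (by positivity) (by positivity)]
      have hk : ((k:ℝ)+1)+1 ≤ 2*((k:ℝ)+1) := by have h0 : (0:ℝ) ≤ (k:ℝ) := Nat.cast_nonneg k; linarith
      have hD0 : (0:ℝ) ≤ D := by linarith
      have hDP : (0:ℝ) ≤ D*P*((k:ℝ)+1) := by positivity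
      have hmm := mul_le_mul_of_nonneg_left hk hDP
      nlinarith [hmm]
    have h5 : ∑ k ∈ Finset.range N, 2*D*P/((k:ℝ)+1) = 2*D*P * ∑ k ∈ Finset.range N, 1/((k:ℝ)+1) := by
      rw [Finset.mul_sum]
      exact Finset.sum_congr rfl fun k _ => by rw [mul_one_div]
    have h6 : 2*D*P * ∑ k ∈ Finset.range N, 1/((k:ℝ)+1) ≤ 2*D*P*L := by
      apply mul_le_mul_of_nonneg_left (hHarm.trans_eq hL.symm) (by positivity)
    linarith
  -- bound for the perpendicular sum
  have hB : ∑ η ∈ S, 1/(1 + b η) ≤ 2*P + (2*(N:ℝ)+1)*(2*D)^(n-1)*(N:ℝ)^(n-2)*L := by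
    have h1 := hSBP b (fun η => Real.sqrt_nonneg _)
    have h2 : ∑ k ∈ Finset.range N, ((S.filter (fun η => b η ≤ (k:ℝ)+1)).card : ℝ)/((k:ℝ)+1)^2 ≤
        ∑ k ∈ Finset.range N, (2*(N:ℝ)+1)*(2*D)^(n-1)*(N:ℝ)^(n-2)/((k:ℝ)+1) := by
      apply Finset.sum_le_sum
      intro k hk
      have h3 := hcountB k
      have hkN : (k:ℝ)+1 ≤ (N:ℝ) := by
        have := Finset.mem_range.1 hk
        exact_mod_cast Nat.succ_le_of_lt this
      have h4 : ((S.filter (fun η => b η ≤ (k:ℝ)+1)).card : ℝ)/((k:ℝ)+1)^2 ≤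
          ((2*(N:ℝ)+1) * (D*(((k:ℝ)+1)+1))^(n-1))/((k:ℝ)+1)^2 := by gcongr
      refine h4.trans ?_
      have hD0 : (0:ℝ) < D := by linarith
      have hstep : (D*(((k:ℝ)+1)+1))^(n-1) ≤ (2*D)^(n-1) * ((k:ℝ)+1)^(n-1) := by
        rw [← mul_pow]
        apply pow_le_pow_left₀ (by positivity)
        have h0 : (0:ℝ) ≤ (k:ℝ) := Nat.cast_nonneg k
        have hD0' : (0:ℝ) ≤ D := by linarith
        nlinarith
      have hstep2 : ((k:ℝ)+1)^(n-1) = ((k:ℝ)+1)^(n-2) * ((k:ℝ)+1) := by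
        rw [← pow_succ]
        congr 1
        omega
      have hstep3 : ((k:ℝ)+1)^(n-2) ≤ (N:ℝ)^(n-2) := by
        apply pow_le_pow_left₀ (by positivity) hkN
      rw [div_le_div_iff₀ (by positivity) (by positivity)]
      calc (2*(N:ℝ)+1) * (D*(((k:ℝ)+1)+1))^(n-1) * ((k:ℝ)+1)
          ≤ (2*(N:ℝ)+1) * ((2*D)^(n-1) * ((k:ℝ)+1)^(n-1)) * ((k:ℝ)+1) := by gcongr
        _ = (2*(N:ℝ)+1)*(2*D)^(n-1)*(N:ℝ)^(n-2) * ((k:ℝ)+1)^2 *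
              (((k:ℝ)+1)^(n-2) / (N:ℝ)^(n-2)) := by
            rw [hstep2]; field_simp
        _ ≤ (2*(N:ℝ)+1)*(2*D)^(n-1)*(N:ℝ)^(n-2) * ((k:ℝ)+1)^2 * 1 := by
            apply mul_le_mul_of_nonneg_left _ (by positivity)
            rw [div_le_one (by positivity)]
            exact hstep3
        _ = (2*(N:ℝ)+1)*(2*D)^(n-1)*(N:ℝ)^(n-2) * ((k:ℝ)+1)^2 := by ring
    have h5 : ∑ k ∈ Finset.range N, (2*(N:ℝ)+1)*(2*D)^(n-1)*(N:ℝ)^(n-2)/((k:ℝ)+1) =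
        (2*(N:ℝ)+1)*(2*D)^(n-1)*(N:ℝ)^(n-2) * ∑ k ∈ Finset.range N, 1/((k:ℝ)+1) := by
      rw [Finset.mul_sum]
      exact Finset.sum_congr rfl fun k _ => by rw [mul_one_div]
    have h6 : (2*(N:ℝ)+1)*(2*D)^(n-1)*(N:ℝ)^(n-2) * ∑ k ∈ Finset.range N, 1/((k:ℝ)+1) ≤
        (2*(N:ℝ)+1)*(2*D)^(n-1)*(N:ℝ)^(n-2)*L := by
      apply mul_le_mul_of_nonneg_left (hHarm.trans_eq hL.symm) (by positivity)
    linarith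
  -- numeric facts
  have hG1 : (1:ℝ) ≤ Real.log (2+μ) := by
    rw [Real.le_log_iff_exp_le (by linarith)]
    have := Real.exp_one_lt_d9
    linarith
  have hG0 : (0:ℝ) ≤ Real.log (2+μ) := by linarith
  have h2N : 2*(N:ℝ)+1 ≤ 6*μ := by linarith
  have hNμ : (N:ℝ) ≤ 3*μ := by linarith
  have hPle : P ≤ 6^(n-1)*μ^(n-1) := by
    rw [hP, show (6:ℝ)^(n-1)*μ^(n-1) = (6*μ)^(n-1) by rw [mul_pow]]
    exact pow_le_pow_left₀ (by positivity) h2N _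
  have hNpow : (N:ℝ)^(n-2) ≤ 3^(n-2)*μ^(n-2) := by
    rw [show (3:ℝ)^(n-2)*μ^(n-2) = (3*μ)^(n-2) by rw [mul_pow]]
    exact pow_le_pow_left₀ (by positivity) hNμ _
  have hLle : L ≤ 3*Real.log (2+μ) := by
    rw [hL]
    have h1 : (N:ℝ) ≤ (2+μ)^2 := by nlinarith
    have h2 : Real.log N ≤ Real.log ((2+μ)^2) := Real.log_le_log (by linarith) h1
    rw [Real.log_pow] at h2
    push_cast at h2
    linarith
  have hμμ : μ * μ^(n-2) = μ^(n-1) := by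
    rw [mul_comm, ← pow_succ]
    congr 1
    omega
  set G := Real.log (2+μ) with hG
  set M := μ^(n-1) with hM
  have hM0 : (0:ℝ) ≤ M := by positivity
  have hL0' : (0:ℝ) ≤ L := by linarith
  have hD0 : (0:ℝ) ≤ D := by linarith
  have hPMG : P ≤ 6^(n-1)*M*G := by
    have h1 : 6^(n-1)*M*1 ≤ 6^(n-1)*M*G := by
      apply mul_le_mul_of_nonneg_left hG1 (by positivity)
    calc P ≤ 6^(n-1)*M := hPle
      _ = 6^(n-1)*M*1 := by ring
      _ ≤ 6^(n-1)*M*G := h1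
  have hfinalA : 2*P + 2*D*P*L ≤ (6^(n-1)*(2+6*D)) * M * G := by
    have t2 : P * L ≤ (6^(n-1)*M) * (3*G) := mul_le_mul hPle hLle hL0' (by positivity)
    nlinarith [hPMG, t2, hD0]
  have hfinalB : 2*P + (2*(N:ℝ)+1)*(2*D)^(n-1)*(N:ℝ)^(n-2)*L ≤
      (2*6^(n-1) + 18*(2*D)^(n-1)*3^(n-2)) * M * G := by
    have hcore : (2*(N:ℝ)+1)*(2*D)^(n-1)*(N:ℝ)^(n-2) ≤ (6*μ)*(2*D)^(n-1)*(3^(n-2)*μ^(n-2)) := by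
      gcongr
    have t3 : ((2*(N:ℝ)+1)*(2*D)^(n-1)*(N:ℝ)^(n-2))*L ≤
        ((6*μ)*(2*D)^(n-1)*(3^(n-2)*μ^(n-2)))*(3*G) :=
      mul_le_mul hcore hLle hL0' (by positivity)
    have t4 : ((6*μ)*(2*D)^(n-1)*(3^(n-2)*μ^(n-2)))*(3*G) =
        18*(2*D)^(n-1)*3^(n-2)*M*G := by
      simp only [← hμμ]; ring
    nlinarith [hPMG, t3, t4.symm ▸ t3]
  -- final assembly
  rw [hstep1]
  calc ∑ η ∈ S, 1 / (lam + min |⟪ξ, latticeVec η⟫|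
          (Real.sqrt (‖ξ‖ ^ 2 * ‖latticeVec η‖ ^ 2 - ⟪ξ, latticeVec η⟫ ^ 2)))
      ≤ ∑ η ∈ S, (1/lam) * (1/(1 + a η) + 1/(1 + b η)) := Finset.sum_le_sum hstep2
    _ = (1/lam) * (∑ η ∈ S, 1/(1 + a η) + ∑ η ∈ S, 1/(1 + b η)) := by
        rw [← Finset.mul_sum, ← Finset.sum_add_distrib]
    _ ≤ (1/lam) * ((2*P + 2*D*P*L) + (2*P + (2*(N:ℝ)+1)*(2*D)^(n-1)*(N:ℝ)^(n-2)*L)) := by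
        apply mul_le_mul_of_nonneg_left (by linarith) (by positivity)
    _ ≤ (1/lam) * ((6^(n-1)*(2+6*D) + 2*6^(n-1) + 18*(2*D)^(n-1)*3^(n-2)) * M * G) := by
        apply mul_le_mul_of_nonneg_left (by nlinarith [hfinalA, hfinalB]) (by positivity)
    _ = (6^(n-1)*(2+6*D) + 2*6^(n-1) + 18*(2*D)^(n-1)*3^(n-2)) * M * G / lam := by
        ring

end
end

section
/- Let n ≥ 1, let ξ, η ∈ ℝⁿ, and let t, s ∈ ℝ with |s| ≤ 1 and |tξ + sη| ≤ 2. Then |t| · |⟨ξ,η⟩| ≤ 2|η| + |η|² and |t| · (|ξ|²|η|² − ⟨ξ,η⟩²)^{1/2} ≤ 2|η|. -/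
open RealInnerProductSpace

/-- geometric tube-intersection estimate.  If `|s| ≤ 1` and
`|tξ + sη| ≤ 2`, then `|t| |⟨ξ,η⟩| ≤ 2|η| + |η|²` and `|t| |ξ ∧ η| ≤ 2|η|`,
where `|ξ ∧ η| = (|ξ|²|η|² − ⟨ξ,η⟩²)^{1/2}`. -/
theorem tube_time_interval_bound (n : ℕ) (hn : 1 ≤ n)
    (ξ η : EuclideanSpace ℝ (Fin n)) (t s : ℝ)
    (hs : |s| ≤ 1) (hts : ‖t • ξ + s • η‖ ≤ 2) :
    |t| * |⟪ξ, η⟫| ≤ 2 * ‖η‖ + ‖η‖ ^ 2 ∧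
    |t| * Real.sqrt (‖ξ‖ ^ 2 * ‖η‖ ^ 2 - ⟪ξ, η⟫ ^ 2) ≤ 2 * ‖η‖ := by
  set x := t • ξ + s • η with hx
  have hCS : |⟪ξ, η⟫| ≤ ‖ξ‖ * ‖η‖ := abs_real_inner_le_norm ξ η
  have hD : 0 ≤ ‖ξ‖ ^ 2 * ‖η‖ ^ 2 - ⟪ξ, η⟫ ^ 2 := by
    nlinarith [abs_nonneg ⟪ξ, η⟫, sq_abs ⟪ξ, η⟫, norm_nonneg ξ, norm_nonneg η]
  set D := ‖ξ‖ ^ 2 * ‖η‖ ^ 2 - ⟪ξ, η⟫ ^ 2 with hDdef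
  constructor
  · have h1 : t * ⟪ξ, η⟫ = ⟪x, η⟫ - s * ‖η‖ ^ 2 := by
      simp only [hx, inner_add_left, real_inner_smul_left,
        real_inner_self_eq_norm_sq]
      ring
    have h2 : |⟪x, η⟫| ≤ 2 * ‖η‖ :=
      le_trans (abs_real_inner_le_norm x η)
        (by nlinarith [norm_nonneg η, norm_nonneg x])
    have h3 : |s * ‖η‖ ^ 2| ≤ ‖η‖ ^ 2 := by
      rw [abs_mul, abs_of_nonneg (sq_nonneg ‖η‖)]
      nlinarith [sq_nonneg ‖η‖]
    calc |t| * |⟪ξ, η⟫| = |t * ⟪ξ, η⟫| := (abs_mul _ _).symm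
      _ ≤ |⟪x, η⟫| + |s * ‖η‖ ^ 2| := by rw [h1]; exact abs_sub _ _
      _ ≤ 2 * ‖η‖ + ‖η‖ ^ 2 := add_le_add h2 h3
  · set w : EuclideanSpace ℝ (Fin n) :=
      (t * ‖η‖ ^ 2) • ξ - (t * ⟪ξ, η⟫) • η with hw
    have hxw : ⟪x, w⟫ = t ^ 2 * D := by
      simp only [hx, hw, hDdef, inner_sub_right, inner_add_left,
        real_inner_smul_left, real_inner_smul_right,
        real_inner_self_eq_norm_sq, real_inner_comm ξ η]
      ring
    have hww : ⟪w, w⟫ = ‖η‖ ^ 2 * (t ^ 2 * D) := by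
      simp only [hw, hDdef, inner_sub_right, inner_sub_left,
        real_inner_smul_left, real_inner_smul_right,
        real_inner_self_eq_norm_sq, real_inner_comm ξ η,
        norm_smul, Real.norm_eq_abs, mul_pow, sq_abs]
      ring
    set A := |t| * Real.sqrt D with hA
    have hA0 : 0 ≤ A := mul_nonneg (abs_nonneg t) (Real.sqrt_nonneg D)
    have hA2 : A ^ 2 = t ^ 2 * D := by
      rw [hA, mul_pow, sq_abs, Real.sq_sqrt hD]
    have hnw : ‖w‖ = ‖η‖ * A := by
      have h1 : ‖w‖ ^ 2 = (‖η‖ * A) ^ 2 := by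
        rw [← real_inner_self_eq_norm_sq, hww, mul_pow, hA2]
      rw [← Real.sqrt_sq (norm_nonneg w), h1,
        Real.sqrt_sq (mul_nonneg (norm_nonneg η) hA0)]
    have hkey : A ^ 2 ≤ 2 * ‖η‖ * A := by
      calc A ^ 2 = ⟪x, w⟫ := by rw [hA2, hxw]
        _ ≤ ‖x‖ * ‖w‖ := real_inner_le_norm x w
        _ ≤ 2 * ‖w‖ := by nlinarith [norm_nonneg w, norm_nonneg x]
        _ = 2 * ‖η‖ * A := by rw [hnw]; ring
    rcases eq_or_lt_of_le hA0 with h | h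
    · rw [← h]; positivity
    · nlinarith
end
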